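/- arXiv:math/0507456 — 12 statements merged into one kernel-verified Lean document; each statement's English description precedes it below -/
import Mathlib

section
/- If an edge-coloring of a complete graph contains no rainbow n-cycle and no rainbow m-cycle (where n, m ≥ 3), then it contains no rainbow (n+m−2)-cycle. -/
def IsRainbowCycle {V C : Type*} {n : ℕ} (col : V → V → C) (v : Fin n → V) : Prop :=
  Function.Injective v ∧
    Function.Injective (fun i : Fin n =>
      col (v i) (v ⟨(i.val + 1) % n, Nat.mod_lt _ i.pos⟩))

def ContainsRainbowCycle {V C : Type*} (col : V → V → C) (n : ℕ) : Prop :=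
  ∃ v : Fin n → V, IsRainbowCycle col v

lemma col_congr {V C : Type*} (col : V → V → C) {N : ℕ} (v : Fin N → V)
    {a b a' b' : Fin N} (h1 : a = a') (h2 : b = b') :
    col (v a) (v b) = col (v a') (v b') := by subst h1; subst h2; rfl

/-- If an arc of length `k` (starting at position `s`) of a rainbow `N`-cycle is closed
by its chord and there is no rainbow `k`-cycle, then the chord color equals the color of
one of the internal edges of the arc. -/
lemma arc_chord {V C : Type*} (col : V → V → C) {N k : ℕ} (hk : 3 ≤ k) (hkN : k < N)
    (v : Fin N → V) (hvinj : Function.Injective v)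
    (hcinj : Function.Injective (fun i : Fin N =>
      col (v i) (v ⟨(i.val + 1) % N, Nat.mod_lt _ i.pos⟩)))
    (h1 : ¬ ContainsRainbowCycle col k) (s : ℕ) (hs : s + k ≤ N + 1) :
    ∃ j, j < k - 1 ∧
      col (v ⟨(s + k - 1) % N, Nat.mod_lt _ (by omega)⟩) (v ⟨s % N, Nat.mod_lt _ (by omega)⟩)
      = col (v ⟨(s + j) % N, Nat.mod_lt _ (by omega)⟩)
            (v ⟨(s + j + 1) % N, Nat.mod_lt _ (by omega)⟩) := by
  have hNpos : 0 < N := by omega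
  have hmod : ∀ x : ℕ, x ≤ N → x % N = if x = N then 0 else x := by
    intro x hx
    split
    · next h => rw [h, Nat.mod_self]
    · next h => exact Nat.mod_eq_of_lt (lt_of_le_of_ne hx h)
  have hidx : ∀ x y : ℕ, x < k → y < k → (s + x) % N = (s + y) % N → x = y := by
    intro x y hx hy h
    rw [hmod _ (by omega), hmod _ (by omega)] at h
    split at h <;> split at h <;> omega
  set z : Fin k → V := fun j => v ⟨(s + j.val) % N, Nat.mod_lt _ hNpos⟩ with hzdef
  have hzinj : Function.Injective z := by
    intro x y h
    exact Fin.ext (hidx x y x.isLt y.isLt (Fin.mk.inj_iff.mp (hvinj h)))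
  have hg : ¬ Function.Injective (fun j : Fin k =>
      col (z j) (z ⟨(j.val + 1) % k, Nat.mod_lt _ j.pos⟩)) := fun h => h1 ⟨z, hzinj, h⟩
  rw [Function.not_injective_iff] at hg
  obtain ⟨a, b, hab, hne⟩ := hg
  have hgx : ∀ x : Fin k,
      col (z x) (z ⟨(x.val + 1) % k, Nat.mod_lt _ x.pos⟩)
      = if _ : x.val < k - 1 then
          col (v ⟨(s + x.val) % N, Nat.mod_lt _ hNpos⟩)
              (v ⟨(s + x.val + 1) % N, Nat.mod_lt _ hNpos⟩)
        else
          col (v ⟨(s + k - 1) % N, Nat.mod_lt _ hNpos⟩) (v ⟨s % N, Nat.mod_lt _ hNpos⟩) := by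
    intro x
    by_cases h : x.val < k - 1
    · rw [dif_pos h]
      have h1' : (x.val + 1) % k = x.val + 1 := Nat.mod_eq_of_lt (by omega)
      refine col_congr col v rfl (Fin.ext ?_)
      show (s + (x.val + 1) % k) % N = (s + x.val + 1) % N
      rw [h1', ← Nat.add_assoc]
    · rw [dif_neg h]
      have hx : x.val = k - 1 := by omega
      have h1' : (x.val + 1) % k = 0 := by rw [hx, Nat.sub_add_cancel (by omega), Nat.mod_self]
      refine col_congr col v (Fin.ext ?_) (Fin.ext ?_)
      · show (s + x.val) % N = (s + k - 1) % N
        have : s + x.val = s + k - 1 := by omega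
        rw [this]
      · show (s + (x.val + 1) % k) % N = s % N
        rw [h1', Nat.add_zero]
  rw [hgx a, hgx b] at hab
  have hEstep : ∀ x y : ℕ, x < k - 1 → y < k - 1 →
      col (v ⟨(s + x) % N, Nat.mod_lt _ hNpos⟩) (v ⟨(s + x + 1) % N, Nat.mod_lt _ hNpos⟩)
      = col (v ⟨(s + y) % N, Nat.mod_lt _ hNpos⟩) (v ⟨(s + y + 1) % N, Nat.mod_lt _ hNpos⟩) →
      x = y := by
    intro x y hx hy h
    have ex : ((s + x) % N + 1) % N = (s + x + 1) % N := Nat.mod_add_mod _ _ _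
    have ey : ((s + y) % N + 1) % N = (s + y + 1) % N := Nat.mod_add_mod _ _ _
    have h' : (fun i : Fin N => col (v i) (v ⟨(i.val + 1) % N, Nat.mod_lt _ i.pos⟩))
          ⟨(s + x) % N, Nat.mod_lt _ hNpos⟩
        = (fun i : Fin N => col (v i) (v ⟨(i.val + 1) % N, Nat.mod_lt _ i.pos⟩))
          ⟨(s + y) % N, Nat.mod_lt _ hNpos⟩ :=
      (col_congr col v rfl (Fin.ext ex)).trans
        (h.trans (col_congr col v rfl (Fin.ext ey)).symm)
    exact hidx x y (by omega) (by omega) (Fin.mk.inj_iff.mp (hcinj h'))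
  by_cases ha : a.val < k - 1 <;> by_cases hb : b.val < k - 1
  · rw [dif_pos ha, dif_pos hb] at hab
    exact absurd (Fin.ext (hEstep _ _ ha hb hab)) hne
  · rw [dif_pos ha, dif_neg hb] at hab
    exact ⟨a.val, ha, hab.symm⟩
  · rw [dif_neg ha, dif_pos hb] at hab
    exact ⟨b.val, hb, hab⟩
  · have ha' := a.isLt
    have hb' := b.isLt
    exact absurd (Fin.ext (by omega)) hne

/-- If a symmetric edge-coloring of a complete graph contains no rainbow `n`-cycle and no
rainbow `m`-cycle (with `n, m ≥ 3`), then it contains no rainbow `(n+m-2)`-cycle. -/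
theorem no_rainbow_add_sub_two {V C : Type*} (col : V → V → C)
    (hsym : ∀ x y, col x y = col y x) (n m : ℕ) (hn : 3 ≤ n) (hm : 3 ≤ m)
    (h1 : ¬ ContainsRainbowCycle col n) (h2 : ¬ ContainsRainbowCycle col m) :
    ¬ ContainsRainbowCycle col (n + m - 2) := by
  rintro ⟨v, hvinj, hcinj⟩
  have hNpos : 0 < n + m - 2 := by omega
  obtain ⟨jA, hjA, hA⟩ := arc_chord col hn (by omega) v hvinj hcinj h1 0 (by omega)
  obtain ⟨jB, hjB, hB⟩ := arc_chord col hm (by omega) v hvinj hcinj h2 (n - 1) (by omega)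
  have e1 : (0 : ℕ) % (n + m - 2) = (n - 1 + m - 1) % (n + m - 2) := by
    rw [Nat.zero_mod, show n - 1 + m - 1 = n + m - 2 from by omega, Nat.mod_self]
  have e2 : (0 + n - 1) % (n + m - 2) = (n - 1) % (n + m - 2) := by
    rw [show 0 + n - 1 = n - 1 from by omega]
  have hchord :
      col (v ⟨(0 + n - 1) % (n + m - 2), Nat.mod_lt _ hNpos⟩)
          (v ⟨0 % (n + m - 2), Nat.mod_lt _ hNpos⟩)
      = col (v ⟨(n - 1 + m - 1) % (n + m - 2), Nat.mod_lt _ hNpos⟩)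
          (v ⟨(n - 1) % (n + m - 2), Nat.mod_lt _ hNpos⟩) :=
    (hsym _ _).trans (col_congr col v (Fin.ext e1) (Fin.ext e2))
  have hab := hA.symm.trans (hchord.trans hB)
  have ex : ((0 + jA) % (n + m - 2) + 1) % (n + m - 2) = (0 + jA + 1) % (n + m - 2) :=
    Nat.mod_add_mod _ _ _
  have ey : ((n - 1 + jB) % (n + m - 2) + 1) % (n + m - 2)
      = (n - 1 + jB + 1) % (n + m - 2) := Nat.mod_add_mod _ _ _
  have h' : (fun i : Fin (n + m - 2) => col (v i)
        (v ⟨(i.val + 1) % (n + m - 2), Nat.mod_lt _ i.pos⟩))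
        ⟨(0 + jA) % (n + m - 2), Nat.mod_lt _ hNpos⟩
      = (fun i : Fin (n + m - 2) => col (v i)
        (v ⟨(i.val + 1) % (n + m - 2), Nat.mod_lt _ i.pos⟩))
        ⟨(n - 1 + jB) % (n + m - 2), Nat.mod_lt _ hNpos⟩ :=
    (col_congr col v rfl (Fin.ext ex)).trans
      (hab.trans (col_congr col v rfl (Fin.ext ey)).symm)
  have := Fin.mk.inj_iff.mp (hcinj h')
  rw [Nat.mod_eq_of_lt (by omega), Nat.mod_eq_of_lt (by omega)] at this
  omega
end

section
/- Let n = 2k+1 be an odd integer with k ≥ 1. If an edge-coloring of a complete graph contains no rainbow n-cycle, then it contains no rainbow m-cycle, where m = n(n−1)/2 = k(2k+1). -/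
set_option maxHeartbeats 1600000


section RainbowAux

lemma natCast_inj_of_lt {m a b : ℕ} (ha : a < m) (hb : b < m) (h : (a : ZMod m) = b) : a = b := by
  have := congrArg ZMod.val h
  rwa [ZMod.val_natCast_of_lt ha, ZMod.val_natCast_of_lt hb] at this

/-- From no rainbow n-cycle: any injective `z : ZMod n → V` has non-injective cyclic colors. -/
lemma no_rainbow_zmod {V C : Type*} (col : V → V → C) {n : ℕ} (hn : 0 < n)
    (h : ¬ ContainsRainbowCycle col n) (z : ZMod n → V) (hz : Function.Injective z) :
    ¬ Function.Injective (fun j : ZMod n => col (z j) (z (j + 1))) := by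
  intro hinj
  apply h
  haveI : NeZero n := ⟨hn.ne'⟩
  have hkey : ∀ i : Fin n, (((i.val + 1) % n : ℕ) : ZMod n) = (i.val : ZMod n) + 1 := by
    intro i; rw [ZMod.natCast_mod]; push_cast; ring
  have hcastinj : Function.Injective (fun i : Fin n => ((i.val : ℕ) : ZMod n)) := by
    intro i i' hii
    exact Fin.ext (natCast_inj_of_lt i.isLt i'.isLt hii)
  set v : Fin n → V := fun i => z ((i.val : ℕ) : ZMod n) with hv
  refine ⟨v, ?_⟩
  have heq : (fun i : Fin n => col (v i) (v ⟨(i.val + 1) % n, Nat.mod_lt _ i.pos⟩)) =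
      (fun j : ZMod n => col (z j) (z (j + 1))) ∘ (fun i : Fin n => ((i.val : ℕ) : ZMod n)) := by
    funext i
    simp only [Function.comp_apply, hv]
    rw [hkey i]
  show Function.Injective v ∧ _
  exact ⟨hz.comp hcastinj, heq ▸ hinj.comp hcastinj⟩

lemma int_eq_zero_of_mul_bound {K G : ℤ} (hK : 0 < K) (h1 : -K < K * G) (h2 : K * G < K) :
    G = 0 := by
  rcases lt_trichotomy G 0 with hg | hg | hg
  · exfalso
    have h3 : K * G ≤ K * (-1) := mul_le_mul_of_nonneg_left (by omega) hK.le
    have h4 : K * (-1) = -K := by ring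
    linarith
  · exact hg
  · exfalso
    have h3 : K * 1 ≤ K * G := mul_le_mul_of_nonneg_left (by omega) hK.le
    have h4 : K * 1 = K := by ring
    linarith

lemma int_q_cases {M q s : ℤ} (hM : 0 < M) (h1 : -(2*M) < s) (h2 : s < 2*M)
    (hq : s = M * q) : q = -1 ∨ q = 0 ∨ q = 1 := by
  by_contra hcon
  push_neg at hcon
  have hq2 : q ≤ -2 ∨ 2 ≤ q := by omega
  rcases hq2 with h' | h'
  · have h3 : M * q ≤ M * (-2) := mul_le_mul_of_nonneg_left (by omega) hM.le
    have h4 : M * (-2) = -(2*M) := by ring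
    rw [hq] at h1
    linarith
  · have h3 : M * 2 ≤ M * q := mul_le_mul_of_nonneg_left (by omega) hM.le
    have h4 : M * 2 = 2*M := by ring
    rw [hq] at h2
    linarith

lemma o0_lt {k a : ℕ} (hk : 1 ≤ k) (ha : a ≤ 2 * k) :
    (if a ≤ k then 2 * k * a else 2 * k + 1 - a) < 2 * k * k + k := by
  by_cases h : a ≤ k
  · rw [if_pos h]
    have h2 : 2 * k * a ≤ 2 * k * k := Nat.mul_le_mul_left _ h
    linarith
  · rw [if_neg h]
    have h2 : 2 * k * 1 ≤ 2 * k * k := Nat.mul_le_mul_left _ hk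
    have h3 : 2 * k + 1 - a ≤ 2 * k := by omega
    have h4 : 2 * k * 1 = 2 * k := by ring
    linarith

lemma o0_inj {k a b : ℕ} (hk : 1 ≤ k) (ha : a ≤ 2 * k) (hb : b ≤ 2 * k)
    (heq : (if a ≤ k then 2 * k * a else 2 * k + 1 - a)
         = (if b ≤ k then 2 * k * b else 2 * k + 1 - b)) : a = b := by
  by_cases ha' : a ≤ k <;> by_cases hb' : b ≤ k
  · rw [if_pos ha', if_pos hb'] at heq
    exact Nat.eq_of_mul_eq_mul_left (by omega) heq
  · rw [if_pos ha', if_neg hb'] at heq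
    exfalso
    rcases Nat.eq_zero_or_pos a with rfl | hpos
    · rw [mul_zero] at heq; omega
    · have h2 : 2 * k * 1 ≤ 2 * k * a := Nat.mul_le_mul_left _ hpos
      have h3 : 2 * k + 1 - b ≤ k := by omega
      have h4 : 2 * k * 1 = 2 * k := by ring
      linarith
  · rw [if_neg ha', if_pos hb'] at heq
    exfalso
    rcases Nat.eq_zero_or_pos b with rfl | hpos
    · rw [mul_zero] at heq; omega
    · have h2 : 2 * k * 1 ≤ 2 * k * b := Nat.mul_le_mul_left _ hpos
      have h3 : 2 * k + 1 - a ≤ k := by omega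
      have h4 : 2 * k * 1 = 2 * k := by ring
      linarith
  · rw [if_neg ha', if_neg hb'] at heq
    omega

lemma gamma_lt {k a : ℕ} (hk : 1 ≤ k) (ha : a ≤ 2 * k) (F : ℕ → ℕ)
    (hFlt : ∀ i, F i < 2 * k) (hFk : F k < k) :
    (if a ≤ k then 2 * k * a + F a else 2 * k - a) < 2 * k * k + k := by
  by_cases h : a ≤ k
  · rw [if_pos h]
    rcases eq_or_lt_of_le h with rfl | hlt
    · have := hFk; linarith
    · have h2 : 2 * k * (a + 1) ≤ 2 * k * k := Nat.mul_le_mul_left _ (by omega)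
      have h3 : 2 * k * (a + 1) = 2 * k * a + 2 * k := by ring
      have h4 := hFlt a
      linarith
  · rw [if_neg h]
    have h2 : 2 * k * 1 ≤ 2 * k * k := Nat.mul_le_mul_left _ hk
    have h3 : 2 * k - a ≤ 2 * k := by omega
    have h4 : 2 * k * 1 = 2 * k := by ring
    linarith

lemma gamma_inj {k a b : ℕ} (hk : 1 ≤ k) (ha : a ≤ 2 * k) (hb : b ≤ 2 * k) (F : ℕ → ℕ)
    (hFlt : ∀ i, F i < 2 * k) (hF0 : k ≤ F 0)
    (heq : (if a ≤ k then 2 * k * a + F a else 2 * k - a)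
         = (if b ≤ k then 2 * k * b + F b else 2 * k - b)) : a = b := by
  have key : ∀ c d : ℕ, c ≤ k → d ≤ k → c < d → 2 * k * c + F c ≠ 2 * k * d + F d := by
    intro c d hc hd hcd
    have h2 : 2 * k * (c + 1) ≤ 2 * k * d := Nat.mul_le_mul_left _ (by omega)
    have h3 : 2 * k * (c + 1) = 2 * k * c + 2 * k := by ring
    have h4 := hFlt c
    intro hcon
    linarith
  have mix : ∀ c d : ℕ, c ≤ k → ¬ d ≤ k → d ≤ 2 * k → 2 * k * c + F c ≠ 2 * k - d := by
    intro c d hc hd hd2 hcon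
    obtain ⟨R, hR⟩ : ∃ R, 2 * k - d = R := ⟨_, rfl⟩
    have hR2 : R + d = 2 * k := by omega
    have h3 : R + 1 ≤ k := by omega
    rw [hR] at hcon
    rcases Nat.eq_zero_or_pos c with rfl | hpos
    · rw [mul_zero] at hcon
      omega
    · have h2 : 2 * k * 1 ≤ 2 * k * c := Nat.mul_le_mul_left _ hpos
      have h4 : 2 * k * 1 = 2 * k := by ring
      linarith
  by_cases ha' : a ≤ k <;> by_cases hb' : b ≤ k
  · rw [if_pos ha', if_pos hb'] at heq
    rcases lt_trichotomy a b with h | h | h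
    · exact absurd heq (key a b ha' hb' h)
    · exact h
    · exact absurd heq.symm (key b a hb' ha' h)
  · rw [if_pos ha', if_neg hb'] at heq
    exact absurd heq (mix a b ha' hb' hb)
  · rw [if_neg ha', if_pos hb'] at heq
    exact absurd heq.symm (mix b a hb' ha' ha)
  · rw [if_neg ha', if_neg hb'] at heq
    omega

lemma rainbow_aux {V C : Type*} (col : V → V → C)
    (hsym : ∀ x y, col x y = col y x) (k : ℕ) (hk : 1 ≤ k)
    (h : ¬ ContainsRainbowCycle col (2 * k + 1))
    (u : ZMod (k * (2 * k + 1)) → V) (hu : Function.Injective u)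
    (c : ZMod (k * (2 * k + 1)) → C)
    (hcdef : ∀ j, c j = col (u j) (u (j + 1)))
    (hc : Function.Injective c) : False := by
  have hnm : 2 * k + 1 ≤ k * (2 * k + 1) := Nat.le_mul_of_pos_left _ (by omega)
  have hm2k : 2 * k * k + k = k * (2 * k + 1) := by ring
  haveI : NeZero (k * (2 * k + 1)) := ⟨by omega⟩
  have NR := no_rainbow_zmod col (n := 2 * k + 1) (by omega) h
  have hm0 : ((k * (2 * k + 1) : ℕ) : ZMod (k * (2 * k + 1))) = 0 := ZMod.natCast_self _
  -- Step A : window lemma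
  have hA : ∀ i : ZMod (k * (2 * k + 1)), ∃ t : ℕ, t < 2 * k ∧
      col (u i) (u (i + ((2 * k : ℕ) : ZMod (k * (2 * k + 1))))) = c (i + ((t : ℕ) : ZMod (k * (2 * k + 1)))) := by
    haveI : NeZero (2 * k + 1) := ⟨by omega⟩
    haveI : Fact (1 < 2 * k + 1) := ⟨by omega⟩
    have hval : ∀ j : ZMod (2 * k + 1), (j + 1).val = (j.val + 1) % (2 * k + 1) := by
      intro j; rw [ZMod.val_add, ZMod.val_one]
    intro i
    set z : ZMod (2 * k + 1) → V :=
      fun j => u (i + ((j.val : ℕ) : ZMod (k * (2 * k + 1)))) with hz_def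
    have hzinj : Function.Injective z := by
      intro a b hab
      have h2 := add_left_cancel (hu hab)
      exact ZMod.val_injective _
        (natCast_inj_of_lt (lt_of_lt_of_le a.val_lt hnm) (lt_of_lt_of_le b.val_lt hnm) h2)
    have hni := NR z hzinj
    rw [Function.not_injective_iff] at hni
    obtain ⟨a, b, hab, hne⟩ := hni
    have hcolA : ∀ j : ZMod (2 * k + 1),
        col (z j) (z (j + 1)) = if j.val = 2 * k
          then col (u i) (u (i + ((2 * k : ℕ) : ZMod (k * (2 * k + 1)))))
          else c (i + ((j.val : ℕ) : ZMod (k * (2 * k + 1)))) := by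
      intro j
      by_cases hj : j.val = 2 * k
      · rw [if_pos hj]
        have h1 : (j + 1).val = 0 := by rw [hval, hj]; exact Nat.mod_self _
        rw [hz_def]
        simp only [h1, hj]
        rw [Nat.cast_zero, add_zero]
        exact hsym _ _
      · rw [if_neg hj]
        have hjlt : j.val < 2 * k := by have := j.val_lt; omega
        have h1 : (j + 1).val = j.val + 1 := by rw [hval]; exact Nat.mod_eq_of_lt (by omega)
        rw [hz_def]
        simp only [h1]
        rw [hcdef]
        congr 1
        push_cast
        ring
    rw [hcolA a, hcolA b] at hab
    by_cases ha : a.val = 2 * k <;> by_cases hb : b.val = 2 * k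
    · exact absurd (ZMod.val_injective _ (ha.trans hb.symm)) hne
    · rw [if_pos ha, if_neg hb] at hab
      exact ⟨b.val, by have := b.val_lt; omega, hab⟩
    · rw [if_neg ha, if_pos hb] at hab
      exact ⟨a.val, by have := a.val_lt; omega, hab.symm⟩
    · rw [if_neg ha, if_neg hb] at hab
      have h2 := add_left_cancel (hc hab)
      have h3 := natCast_inj_of_lt (lt_of_lt_of_le a.val_lt hnm) (lt_of_lt_of_le b.val_lt hnm) h2
      exact absurd (ZMod.val_injective _ h3) hne
  choose f hflt hfc using hA
  -- Step C : mixed cycle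
  have hstep : ∀ x : ZMod (k * (2 * k + 1)), k ≤ f x →
      f (x + ((2 * k * k : ℕ) : ZMod (k * (2 * k + 1)))) < k → False := by
    haveI : NeZero (2 * k + 1) := ⟨by omega⟩
    have hval : ∀ j : ZMod (2 * k + 1), (j + 1).val = (j.val + 1) % (2 * k + 1) := by
      haveI : Fact (1 < 2 * k + 1) := ⟨by omega⟩
      intro j; rw [ZMod.val_add, ZMod.val_one]
    have hm0' : (k : ZMod (k * (2 * k + 1))) * (2 * k + 1) = 0 := by
      push_cast at hm0; linear_combination hm0
    intro x hx1 hx2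
    set z : ZMod (2 * k + 1) → V := fun j =>
      u (x + (((if j.val ≤ k then 2 * k * j.val else 2 * k + 1 - j.val) : ℕ)
        : ZMod (k * (2 * k + 1)))) with hz_def
    have hzinj : Function.Injective z := by
      intro a b hab
      have h1 := add_left_cancel (hu hab)
      have hA2 : a.val ≤ 2 * k := Nat.le_of_lt_succ (by simpa using a.val_lt)
      have hB2 : b.val ≤ 2 * k := Nat.le_of_lt_succ (by simpa using b.val_lt)
      have h2 := natCast_inj_of_lt (lt_of_lt_of_le (o0_lt hk hA2) hm2k.le)
        (lt_of_lt_of_le (o0_lt hk hB2) hm2k.le) h1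
      exact ZMod.val_injective _ (o0_inj hk hA2 hB2 h2)
    have hni := NR z hzinj
    rw [Function.not_injective_iff] at hni
    obtain ⟨a, b, hab, hne⟩ := hni
    have hcolC : ∀ j : ZMod (2 * k + 1), col (z j) (z (j + 1)) =
        c (x + (((if j.val ≤ k
            then 2 * k * j.val + f (x + ((2 * k * j.val : ℕ) : ZMod (k * (2 * k + 1))))
            else 2 * k - j.val) : ℕ) : ZMod (k * (2 * k + 1)))) := by
      intro j
      have hj2 : j.val ≤ 2 * k := Nat.le_of_lt_succ (by simpa using j.val_lt)
      simp only [hz_def]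
      by_cases hjk : j.val ≤ k
      · have h1 : (j + 1).val = j.val + 1 := by
          rw [hval]; exact Nat.mod_eq_of_lt (by omega)
        rw [if_pos hjk, if_pos hjk]
        simp only [h1]
        by_cases hjek : j.val = k
        · rw [hjek]
          rw [if_neg (by omega : ¬ (k + 1 ≤ k))]
          have hsub : 2 * k + 1 - (k + 1) = k := by omega
          rw [hsub]
          have e1 : x + ((k : ℕ) : ZMod (k * (2 * k + 1))) =
              (x + ((2 * k * k : ℕ) : ZMod (k * (2 * k + 1)))) +
                ((2 * k : ℕ) : ZMod (k * (2 * k + 1))) := by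
            push_cast
            linear_combination -hm0'
          have e2 : x + ((2 * k * k + f (x + ((2 * k * k : ℕ) : ZMod (k * (2 * k + 1)))) : ℕ)
                : ZMod (k * (2 * k + 1))) =
              (x + ((2 * k * k : ℕ) : ZMod (k * (2 * k + 1)))) +
                ((f (x + ((2 * k * k : ℕ) : ZMod (k * (2 * k + 1)))) : ℕ)
                  : ZMod (k * (2 * k + 1))) := by
            push_cast; ring
          rw [e1, e2]
          exact hfc _
        · rw [if_pos (by omega : j.val + 1 ≤ k)]
          have e1 : x + ((2 * k * (j.val + 1) : ℕ) : ZMod (k * (2 * k + 1))) =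
              (x + ((2 * k * j.val : ℕ) : ZMod (k * (2 * k + 1)))) +
                ((2 * k : ℕ) : ZMod (k * (2 * k + 1))) := by
            push_cast; ring
          have e2 : x + ((2 * k * j.val + f (x + ((2 * k * j.val : ℕ) : ZMod (k * (2 * k + 1)))) : ℕ)
                : ZMod (k * (2 * k + 1))) =
              (x + ((2 * k * j.val : ℕ) : ZMod (k * (2 * k + 1)))) +
                ((f (x + ((2 * k * j.val : ℕ) : ZMod (k * (2 * k + 1)))) : ℕ)
                  : ZMod (k * (2 * k + 1))) := by
            push_cast; ring
          rw [e1, e2]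
          exact hfc _
      · rw [if_neg hjk, if_neg hjk]
        have hnext : ((if (j+1).val ≤ k then 2 * k * (j+1).val else 2 * k + 1 - (j+1).val : ℕ)
            : ZMod (k * (2 * k + 1))) = ((2 * k - j.val : ℕ) : ZMod (k * (2 * k + 1))) := by
          by_cases hj2k : j.val = 2 * k
          · have h1 : (j + 1).val = 0 := by rw [hval, hj2k]; exact Nat.mod_self _
            rw [h1, if_pos (by omega)]
            have : 2 * k * 0 = 2 * k - j.val := by omega
            rw [this]
          · have h1 : (j + 1).val = j.val + 1 := by
              rw [hval]; exact Nat.mod_eq_of_lt (by omega)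
            rw [h1, if_neg (by omega)]
            have : 2 * k + 1 - (j.val + 1) = 2 * k - j.val := by omega
            rw [this]
        rw [hnext]
        rw [hsym]
        rw [hcdef (x + ((2 * k - j.val : ℕ) : ZMod (k * (2 * k + 1))))]
        congr 1
        have hsub : (2 * k + 1 - j.val) = (2 * k - j.val) + 1 := by omega
        rw [hsub]
        push_cast
        ring
    rw [hcolC a, hcolC b] at hab
    have h2 := add_left_cancel (hc hab)
    have hA2 : a.val ≤ 2 * k := Nat.le_of_lt_succ (by simpa using a.val_lt)
    have hB2 : b.val ≤ 2 * k := Nat.le_of_lt_succ (by simpa using b.val_lt)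
    have hFlt' : ∀ i : ℕ, (fun a : ℕ => f (x + ((2 * k * a : ℕ) : ZMod (k * (2 * k + 1))))) i < 2 * k :=
      fun i => hflt _
    have hF0' : k ≤ (fun a : ℕ => f (x + ((2 * k * a : ℕ) : ZMod (k * (2 * k + 1))))) 0 := by
      simpa using hx1
    have hFk' : (fun a : ℕ => f (x + ((2 * k * a : ℕ) : ZMod (k * (2 * k + 1))))) k < k := hx2
    have h3 := natCast_inj_of_lt
      (lt_of_lt_of_le (gamma_lt hk hA2 _ hFlt' hFk') hm2k.le)
      (lt_of_lt_of_le (gamma_lt hk hB2 _ hFlt' hFk') hm2k.le) h2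
    exact hne (ZMod.val_injective _ (gamma_inj hk hA2 hB2 _ hFlt' hF0' h3))
  have hstep' : ∀ x : ZMod (k * (2 * k + 1)), k ≤ f x →
      k ≤ f (x + ((2 * k * k : ℕ) : ZMod (k * (2 * k + 1)))) :=
    fun x hx => le_of_not_gt (fun hlt => hstep x hx hlt)
  have hall : ∀ (y : ZMod (k * (2 * k + 1))) (j : ℕ), k ≤ f y →
      k ≤ f (y + ((j * (2 * k * k) : ℕ) : ZMod (k * (2 * k + 1)))) := by
    intro y j
    induction j with
    | zero => intro hy; simpa using hy
    | succ j ih =>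
      intro hy
      have h1 := hstep' _ (ih hy)
      have h2 : (y + ((j * (2 * k * k) : ℕ) : ZMod (k * (2 * k + 1)))) + ((2 * k * k : ℕ) : ZMod (k * (2 * k + 1)))
          = y + (((j + 1) * (2 * k * k) : ℕ) : ZMod (k * (2 * k + 1))) := by push_cast; ring
      rwa [h2] at h1
  -- final orbit cycle
  haveI : NeZero (2 * k + 1) := ⟨by omega⟩
  have hval : ∀ j : ZMod (2 * k + 1), (j + 1).val = (j.val + 1) % (2 * k + 1) := by
    haveI : Fact (1 < 2 * k + 1) := ⟨by omega⟩
    intro j; rw [ZMod.val_add, ZMod.val_one]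
  have hm0' : (k : ZMod (k * (2 * k + 1))) * (2 * k + 1) = 0 := by push_cast at hm0; linear_combination hm0
  have hMZ : ((k * (2 * k + 1) : ℕ) : ℤ) = (k : ℤ) * (2 * k + 1) := by push_cast; ring
  have hkZ : (0 : ℤ) < 2 * (k : ℤ) := by exact_mod_cast (by omega : (0:ℕ) < 2*k)
  -- generic divisibility extractor
  have hdvd : ∀ s t : ℕ, ((s : ZMod (k * (2 * k + 1)))) = (t : ℕ) →
      ∃ q : ℤ, (s : ℤ) - t = ((k : ℤ) * (2 * k + 1)) * q := by
    intro s t hst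
    have h0 : (((s : ℤ) - t : ℤ) : ZMod (k * (2 * k + 1))) = 0 := by
      push_cast
      rw [hst]; ring
    rw [ZMod.intCast_zmod_eq_zero_iff_dvd] at h0
    obtain ⟨q, hq⟩ := h0
    exact ⟨q, by rw [hq, hMZ]⟩
  -- transfer of "k ≤ f" along the orbit
  have htrans : ∀ a b : ℕ, a ≤ 2 * k → b ≤ 2 * k →
      k ≤ f (((2 * k * a : ℕ) : ZMod (k * (2 * k + 1)))) →
      k ≤ f (((2 * k * b : ℕ) : ZMod (k * (2 * k + 1)))) := by
    intro a b ha hb hfa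
    have hj := hall (((2 * k * a : ℕ) : ZMod (k * (2 * k + 1)))) (2 * a + 2 * (2 * k + 1) - 2 * b) hfa
    have hcast : (((2 * k * a : ℕ) : ZMod (k * (2 * k + 1)))) +
        (((2 * a + 2 * (2 * k + 1) - 2 * b) * (2 * k * k) : ℕ) : ZMod (k * (2 * k + 1)))
        = ((2 * k * b : ℕ) : ZMod (k * (2 * k + 1))) := by
      obtain ⟨t, ht⟩ : ∃ t, 2 * a + 2 * (2 * k + 1) - 2 * b = t := ⟨_, rfl⟩
      have ht' : t + 2 * b = 2 * a + 2 * (2 * k + 1) := by omega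
      have htc : (t : ZMod (k * (2 * k + 1))) + 2 * b = 2 * a + 2 * (2 * k + 1) := by
        exact_mod_cast congrArg (Nat.cast : ℕ → ZMod (k * (2 * k + 1))) ht'
      rw [ht]
      push_cast
      linear_combination (2 * (k : ZMod (k * (2 * k + 1))) * k) * htc +
        (2 * (a : ZMod (k * (2 * k + 1))) - 2 * b + 4 * k) * hm0'
    rwa [hcast] at hj
  -- the orbit cycle
  set z2 : ZMod (2 * k + 1) → V :=
    fun j => u (((2 * k * j.val : ℕ) : ZMod (k * (2 * k + 1)))) with hz2_def
  have hz2 : Function.Injective z2 := by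
    intro a b hab
    obtain ⟨q, hq⟩ := hdvd _ _ (hu hab)
    have hA : (a.val : ℤ) ≤ 2 * k := by exact_mod_cast Nat.le_of_lt_succ (by simpa using a.val_lt)
    have hB : (b.val : ℤ) ≤ 2 * k := by exact_mod_cast Nat.le_of_lt_succ (by simpa using b.val_lt)
    have hA0 : (0:ℤ) ≤ (a.val : ℤ) := Int.natCast_nonneg _
    have hB0 : (0:ℤ) ≤ (b.val : ℤ) := Int.natCast_nonneg _
    have hsab : ((2 * k * a.val : ℕ) : ℤ) - ((2 * k * b.val : ℕ) : ℤ)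
        = 2 * (k:ℤ) * ((a.val : ℤ) - b.val) := by push_cast; ring
    rw [hsab] at hq
    -- bound q
    have hkpos : (0:ℤ) < (k:ℤ) * (2 * k + 1) := by positivity
    have e1 : 2*(k:ℤ)*(a.val:ℤ) ≤ 2*(k:ℤ)*(2*(k:ℤ)) := mul_le_mul_of_nonneg_left hA (by positivity)
    have e2 : (0:ℤ) ≤ 2*(k:ℤ)*(a.val:ℤ) := by positivity
    have e3 : 2*(k:ℤ)*(b.val:ℤ) ≤ 2*(k:ℤ)*(2*(k:ℤ)) := mul_le_mul_of_nonneg_left hB (by positivity)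
    have e4 : (0:ℤ) ≤ 2*(k:ℤ)*(b.val:ℤ) := by positivity
    have R : 2*(k:ℤ)*(2*(k:ℤ)) + 2*(k:ℤ) = 2*((k:ℤ)*(2*(k:ℤ)+1)) := by ring
    have hqb : q = -1 ∨ q = 0 ∨ q = 1 := by
      refine int_q_cases hkpos ?_ ?_ hq
      · linarith
      · linarith
    rcases hqb with rfl | rfl | rfl
    · exfalso
      have hE : (k:ℤ) * (2 * ((a.val:ℤ) - b.val) + (2 * k + 1)) = 0 := by linear_combination hq
      rcases mul_eq_zero.mp hE with h' | h'
      · have : (k:ℤ) ≥ 1 := by exact_mod_cast hk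
        omega
      · omega
    · have hE : 2 * (k:ℤ) * ((a.val:ℤ) - b.val) = 0 := by linear_combination hq
      have : (a.val : ℤ) = b.val := by
        rcases mul_eq_zero.mp hE with h' | h'
        · exfalso; omega
        · omega
      exact ZMod.val_injective _ (by exact_mod_cast this)
    · exfalso
      have hE : (k:ℤ) * (2 * ((a.val:ℤ) - b.val) - (2 * k + 1)) = 0 := by linear_combination hq
      rcases mul_eq_zero.mp hE with h' | h'
      · have : (k:ℤ) ≥ 1 := by exact_mod_cast hk
        omega
      · omega
  have hni := NR z2 hz2
  rw [Function.not_injective_iff] at hni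
  obtain ⟨a, b, hab, hne⟩ := hni
  -- color computation
  have hcol2 : ∀ j : ZMod (2 * k + 1),
      col (z2 j) (z2 (j + 1)) =
        c (((2 * k * j.val + f (((2 * k * j.val : ℕ) : ZMod (k * (2 * k + 1)))) : ℕ)
            : ZMod (k * (2 * k + 1)))) := by
    intro j
    have hnext : (((2 * k * (j+1).val : ℕ)) : ZMod (k * (2 * k + 1))) =
        (((2 * k * j.val : ℕ)) : ZMod (k * (2 * k + 1))) + ((2 * k : ℕ) : ZMod (k * (2 * k + 1))) := by
      by_cases hj : j.val = 2 * k
      · have h1 : (j + 1).val = 0 := by rw [hval, hj]; exact Nat.mod_self _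
        rw [h1, hj]
        push_cast
        linear_combination (-2 : ZMod (k * (2*k+1))) * hm0'
      · have hjlt : j.val < 2 * k := by have := j.val_lt; omega
        have h1 : (j + 1).val = j.val + 1 := by rw [hval]; exact Nat.mod_eq_of_lt (by omega)
        rw [h1]; push_cast; ring
    rw [hz2_def]
    simp only [hnext]
    rw [hfc]
    congr 1
    push_cast
    ring
  rw [hcol2 a, hcol2 b] at hab
  obtain ⟨q, hq⟩ := hdvd _ _ (hc hab)
  -- notation
  have hA : (a.val : ℤ) ≤ 2 * k := by exact_mod_cast Nat.le_of_lt_succ (by simpa using a.val_lt)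
  have hB : (b.val : ℤ) ≤ 2 * k := by exact_mod_cast Nat.le_of_lt_succ (by simpa using b.val_lt)
  have hA0 : (0:ℤ) ≤ (a.val : ℤ) := Int.natCast_nonneg _
  have hB0 : (0:ℤ) ≤ (b.val : ℤ) := Int.natCast_nonneg _
  set FA := f (((2 * k * a.val : ℕ) : ZMod (k * (2 * k + 1)))) with hFA
  set FB := f (((2 * k * b.val : ℕ) : ZMod (k * (2 * k + 1)))) with hFB
  have hFAb : (FA : ℤ) < 2 * k := by exact_mod_cast hflt _
  have hFBb : (FB : ℤ) < 2 * k := by exact_mod_cast hflt _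
  have hFA0 : (0:ℤ) ≤ (FA : ℤ) := Int.natCast_nonneg _
  have hFB0 : (0:ℤ) ≤ (FB : ℤ) := Int.natCast_nonneg _
  have hA2 : a.val ≤ 2 * k := Nat.le_of_lt_succ (by simpa using a.val_lt)
  have hB2 : b.val ≤ 2 * k := Nat.le_of_lt_succ (by simpa using b.val_lt)
  have hbb : ((k:ℤ) ≤ FA ∧ (k:ℤ) ≤ FB) ∨ ((FA:ℤ) < k ∧ (FB:ℤ) < k) := by
    rcases le_or_gt k FA with h' | h'
    · left
      have h2 := htrans a.val b.val hA2 hB2 (by rw [← hFA]; exact h')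
      rw [← hFB] at h2
      exact ⟨by exact_mod_cast h', by exact_mod_cast h2⟩
    · right
      refine ⟨by exact_mod_cast h', ?_⟩
      by_contra hcon
      push_neg at hcon
      have hcon' : k ≤ FB := by exact_mod_cast hcon
      have h2 := htrans b.val a.val hB2 hA2 (by rw [← hFB]; exact hcon')
      rw [← hFA] at h2
      omega
  have hq' : 2*(k:ℤ)*(a.val:ℤ) + (FA:ℤ) - (2*(k:ℤ)*(b.val:ℤ) + (FB:ℤ))
      = (k:ℤ)*(2*(k:ℤ)+1)*q := by push_cast at hq; linarith
  have hqb : q = -1 ∨ q = 0 ∨ q = 1 := by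
    have hkpos : (0:ℤ) < (k:ℤ) * (2 * k + 1) := by positivity
    have e1 : 2*(k:ℤ)*(a.val:ℤ) ≤ 2*(k:ℤ)*(2*(k:ℤ)) := mul_le_mul_of_nonneg_left hA (by positivity)
    have e2 : (0:ℤ) ≤ 2*(k:ℤ)*(a.val:ℤ) := by positivity
    have e3 : 2*(k:ℤ)*(b.val:ℤ) ≤ 2*(k:ℤ)*(2*(k:ℤ)) := mul_le_mul_of_nonneg_left hB (by positivity)
    have e4 : (0:ℤ) ≤ 2*(k:ℤ)*(b.val:ℤ) := by positivity
    have R : 2*(k:ℤ)*(2*(k:ℤ)) + 2*(k:ℤ) = 2*((k:ℤ)*(2*(k:ℤ)+1)) := by ring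
    refine int_q_cases hkpos ?_ ?_ hq'
    · linarith
    · linarith
  rcases hqb with rfl | rfl | rfl
  · -- q = -1 : sb = sa + m
    have hE : (FB:ℤ) - FA - k = 2*(k:ℤ)*(((a.val:ℤ) - b.val) + k) := by linear_combination -hq'
    have hG := int_eq_zero_of_mul_bound hkZ
      (show -(2*(k:ℤ)) < 2*(k:ℤ)*(((a.val:ℤ) - b.val) + k) by rw [← hE]; rcases hbb with ⟨u1,u2⟩|⟨u1,u2⟩ <;> omega)
      (show 2*(k:ℤ)*(((a.val:ℤ) - b.val) + k) < 2*(k:ℤ) by rw [← hE]; rcases hbb with ⟨u1,u2⟩|⟨u1,u2⟩ <;> omega)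
    rw [hG, mul_zero] at hE
    rcases hbb with ⟨u1,u2⟩|⟨u1,u2⟩ <;> omega
  · -- q = 0
    have hE : (FA:ℤ) - FB = 2*(k:ℤ)*((b.val:ℤ) - a.val) := by linear_combination hq'
    have hG := int_eq_zero_of_mul_bound hkZ
      (show -(2*(k:ℤ)) < 2*(k:ℤ)*((b.val:ℤ) - a.val) by rw [← hE]; omega)
      (show 2*(k:ℤ)*((b.val:ℤ) - a.val) < 2*(k:ℤ) by rw [← hE]; omega)
    have : (a.val:ℤ) = b.val := by omega
    exact hne (ZMod.val_injective _ (by exact_mod_cast this))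
  · -- q = 1 : sa = sb + m
    have hE : (FA:ℤ) - FB - k = 2*(k:ℤ)*(((b.val:ℤ) - a.val) + k) := by linear_combination hq'
    have hG := int_eq_zero_of_mul_bound hkZ
      (show -(2*(k:ℤ)) < 2*(k:ℤ)*(((b.val:ℤ) - a.val) + k) by rw [← hE]; rcases hbb with ⟨u1,u2⟩|⟨u1,u2⟩ <;> omega)
      (show 2*(k:ℤ)*(((b.val:ℤ) - a.val) + k) < 2*(k:ℤ) by rw [← hE]; rcases hbb with ⟨u1,u2⟩|⟨u1,u2⟩ <;> omega)
    rw [hG, mul_zero] at hE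
    rcases hbb with ⟨u1,u2⟩|⟨u1,u2⟩ <;> omega

/-- For `n = 2k+1` (`k ≥ 1`), if a symmetric edge-coloring contains no rainbow `n`-cycle
then it contains no rainbow `k(2k+1)`-cycle (`= n(n-1)/2`). -/
theorem no_rainbow_binom {V C : Type*} (col : V → V → C)
    (hsym : ∀ x y, col x y = col y x) (k : ℕ) (hk : 1 ≤ k)
    (h : ¬ ContainsRainbowCycle col (2 * k + 1)) :
    ¬ ContainsRainbowCycle col (k * (2 * k + 1)) := by
  intro hcon
  obtain ⟨v, hvinj, hvcol⟩ := hcon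
  have hnm : 2 * k + 1 ≤ k * (2 * k + 1) := Nat.le_mul_of_pos_left _ (by omega)
  haveI : NeZero (k * (2 * k + 1)) := ⟨by omega⟩
  haveI : Fact (1 < k * (2 * k + 1)) := ⟨by omega⟩
  refine rainbow_aux col hsym k hk h (fun j => v ⟨j.val, j.val_lt⟩) ?_
    (fun j => col (v ⟨j.val, j.val_lt⟩)
      (v ⟨(j.val + 1) % (k * (2 * k + 1)), Nat.mod_lt _ (by omega)⟩)) ?_ ?_
  · intro a b hab
    exact ZMod.val_injective _ (congrArg Fin.val (hvinj hab))
  · intro j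
    show col _ _ = col _ _
    congr 1
    show v _ = v _
    congr 1
    apply Fin.ext
    show (j.val + 1) % (k * (2 * k + 1)) = (j + 1).val
    rw [ZMod.val_add, ZMod.val_one]
  · intro j j' hjj
    have h1 := hvcol (a₁ := ⟨j.val, j.val_lt⟩) (a₂ := ⟨j'.val, j'.val_lt⟩) hjj
    exact ZMod.val_injective _ (congrArg Fin.val h1)

end RainbowAux
end

section
/- Let k ≥ 1 and set n = 2k+1 and m = k(2k+1). If an edge-coloring of a complete graph contains no rainbow n-cycle and no rainbow m-cycle, then it contains no rainbow M-cycle for every integer M ≥ 4k³ − 2k² − 8k + 8. -/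
lemma rainbow_combine {V C : Type*} (col : V → V → C)
    (hsym : ∀ x y, col x y = col y x) {a b : ℕ} (ha : 3 ≤ a) (hb : 3 ≤ b)
    (hA : ¬ ContainsRainbowCycle col a) (hB : ¬ ContainsRainbowCycle col b) :
    ¬ ContainsRainbowCycle col (a + b - 2) := by
  suffices H : ∀ N : ℕ, a + b - 2 = N → ¬ ContainsRainbowCycle col N by
    exact H _ rfl
  rintro N hN ⟨v, hvinj, hcinj⟩
  have hN0 : 0 < N := by omega
  have haN : a < N := by omega
  have hbN : b < N := by omega
  set vv : ℕ → V := (fun x => v ⟨x % N, Nat.mod_lt _ hN0⟩) with hvv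
  have vv_eq : ∀ x y : ℕ, x % N = y % N → vv x = vv y := by
    intro x y h
    exact congrArg v (Fin.ext h)
  set cc : ℕ → C := (fun x => col (vv x) (vv (x + 1))) with hcc
  have hccf : ∀ (x : ℕ) (hx : x < N),
      cc x = col (v ⟨x, hx⟩) (v ⟨(x + 1) % N, Nat.mod_lt _ (Fin.mk x hx).pos⟩) := by
    intro x hx
    show col (v ⟨x % N, _⟩) (v ⟨(x + 1) % N, _⟩) = _
    exact congr_arg₂ (fun u w => col (v u) (v w))
      (Fin.ext (Nat.mod_eq_of_lt hx)) (Fin.ext rfl)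
  have cc_inj : ∀ x y : ℕ, x < N → y < N → cc x = cc y → x = y := by
    intro x y hx hy h
    have h' : (fun i : Fin N =>
        col (v i) (v ⟨(i.val + 1) % N, Nat.mod_lt _ i.pos⟩)) ⟨x, hx⟩ =
        (fun i : Fin N =>
        col (v i) (v ⟨(i.val + 1) % N, Nat.mod_lt _ i.pos⟩)) ⟨y, hy⟩ := by
      simpa using (hccf x hx).symm.trans (h.trans (hccf y hy))
    exact congrArg Fin.val (hcinj h')
  have hmod : ∀ x : ℕ, x ≤ N → x % N = if x = N then 0 else x := by
    intro x hx
    rcases eq_or_lt_of_le hx with h | h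
    · simp [h]
    · rw [Nat.mod_eq_of_lt h, if_neg (by omega)]
  set chord := col (vv (a - 1)) (vv 0) with hchord
  have key : ∀ s l : ℕ, 3 ≤ l → l < N → s + l ≤ N + 1 →
      ¬ ContainsRainbowCycle col l →
      col (vv (s + l - 1)) (vv s) = chord →
      ∃ p, p < l - 1 ∧ cc (s + p) = chord := by
    intro s l hl3 hlN hsl hlcrc hlast
    set w : Fin l → V := (fun i => vv (s + i.val)) with hw
    have hw_inj : Function.Injective w := by
      intro i j h
      have hi := i.isLt; have hj := j.isLt
      have h2 : (s + i.val) % N = (s + j.val) % N := congrArg Fin.val (hvinj h)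
      have e1 := hmod (s + i.val) (by omega)
      have e2 := hmod (s + j.val) (by omega)
      rw [e1, e2] at h2
      apply Fin.ext
      split_ifs at h2 <;> omega
    have hnotinj : ¬ Function.Injective
        (fun i : Fin l => col (w i) (w ⟨(i.val + 1) % l, Nat.mod_lt _ i.pos⟩)) := by
      intro h
      exact hlcrc ⟨w, hw_inj, h⟩
    obtain ⟨i, j, hij, hne⟩ := Function.not_injective_iff.mp hnotinj
    have hedge : ∀ i : Fin l,
        col (w i) (w ⟨(i.val + 1) % l, Nat.mod_lt _ i.pos⟩) =
          if i.val = l - 1 then chord else cc (s + i.val) := by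
      intro i
      have hi := i.isLt
      by_cases hc : i.val = l - 1
      · rw [if_pos hc]
        show col (vv (s + i.val)) (vv (s + (i.val + 1) % l)) = chord
        have em : (i.val + 1) % l = 0 := by
          have h1 : i.val + 1 = l := by omega
          rw [h1, Nat.mod_self]
        have e1 : s + (i.val + 1) % l = s := by rw [em]; omega
        have e2 : s + i.val = s + l - 1 := by omega
        rw [e1, e2]
        exact hlast
      · rw [if_neg hc]
        show col (vv (s + i.val)) (vv (s + (i.val + 1) % l)) = cc (s + i.val)
        have em : s + (i.val + 1) % l = s + i.val + 1 := by
          rw [Nat.mod_eq_of_lt (show i.val + 1 < l by omega)]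
          omega
        rw [em]
    rw [hedge i, hedge j] at hij
    have hi := i.isLt; have hj := j.isLt
    split_ifs at hij with h1' h2'
    · exact absurd (Fin.ext (by omega : i.val = j.val)) hne
    · exact ⟨j.val, by omega, hij.symm⟩
    · exact ⟨i.val, by omega, hij⟩
    · have := cc_inj (s + i.val) (s + j.val) (by omega) (by omega) hij
      exact absurd (Fin.ext (by omega : i.val = j.val)) hne
  obtain ⟨p, hp, hpc⟩ := key 0 a ha haN (by omega) hA (by
    have e : 0 + a - 1 = a - 1 := by omega
    rw [e])
  obtain ⟨q, hq, hqc⟩ := key (a - 1) b hb hbN (by omega) hB (by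
    have e : a - 1 + b - 1 = N := by omega
    have e2 : vv N = vv 0 := vv_eq N 0 (by simp)
    rw [e, e2, hsym])
  have := cc_inj (0 + p) (a - 1 + q) (by omega) (by omega) (hpc.trans hqc.symm)
  omega

lemma aux_not_crc_two {V C : Type*} (col : V → V → C)
    (hsym : ∀ x y, col x y = col y x) : ¬ ContainsRainbowCycle col 2 := by
  rintro ⟨v, -, hinj⟩
  have h : (0 : Fin 2) = 1 := by
    apply hinj
    show col (v 0) (v ⟨((0 : Fin 2).val + 1) % 2, _⟩) =
      col (v 1) (v ⟨((1 : Fin 2).val + 1) % 2, _⟩)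
    have e1 : (⟨((0 : Fin 2).val + 1) % 2, Nat.mod_lt _ (0 : Fin 2).pos⟩ : Fin 2) = 1 :=
      Fin.ext (by norm_num)
    have e2 : (⟨((1 : Fin 2).val + 1) % 2, Nat.mod_lt _ (1 : Fin 2).pos⟩ : Fin 2) = 0 :=
      Fin.ext (by norm_num)
    rw [e1, e2]
    exact hsym _ _
  exact absurd h (by decide)

lemma closure_aux {V C : Type*} (col : V → V → C)
    (hsym : ∀ x y, col x y = col y x) (k : ℕ) (hk : 1 ≤ k)
    (h1 : ¬ ContainsRainbowCycle col (2 * k + 1))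
    (h2 : ¬ ContainsRainbowCycle col (k * (2 * k + 1))) :
    ∀ n x y : ℕ, x + y = n → 1 ≤ n →
      ¬ ContainsRainbowCycle col (2 + x * (2 * k - 1) + y * (2 * k * k + k - 2)) := by
  have hq3 : 3 ≤ 2 * k * k + k := by nlinarith
  have hB2 : (2 * k * k + k - 2) + 2 = k * (2 * k + 1) := by
    have h : k * (2 * k + 1) = 2 * k * k + k := by ring
    omega
  intro n
  induction n using Nat.strong_induction_on with
  | _ n ih =>
    intro x y hxy hn
    rcases Nat.lt_or_ge n 2 with hn2 | hn2
    · have hcase : (x = 1 ∧ y = 0) ∨ (x = 0 ∧ y = 1) := by omega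
      rcases hcase with ⟨rfl, rfl⟩ | ⟨rfl, rfl⟩
      · have e : 2 + 1 * (2 * k - 1) + 0 * (2 * k * k + k - 2) = 2 * k + 1 := by
          rw [Nat.one_mul, Nat.zero_mul]
          omega
        rw [e]; exact h1
      · have e : 2 + 0 * (2 * k - 1) + 1 * (2 * k * k + k - 2) = k * (2 * k + 1) := by
          rw [Nat.one_mul, Nat.zero_mul]
          omega
        rw [e]; exact h2
    · rcases Nat.eq_zero_or_pos x with rfl | hx
      · obtain ⟨y', rfl⟩ : ∃ y', y = y' + 1 := ⟨y - 1, by omega⟩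
        have hy' : 1 ≤ y' := by omega
        have hprev := ih (n - 1) (by omega) 0 y' (by omega) (by omega)
        have hcomb := rainbow_combine col hsym
          (a := 2 + 0 * (2 * k - 1) + y' * (2 * k * k + k - 2)) (b := k * (2 * k + 1))
          (by
            have h1' : 1 * (2 * k * k + k - 2) ≤ y' * (2 * k * k + k - 2) :=
              Nat.mul_le_mul hy' (le_refl _)
            rw [Nat.one_mul] at h1'
            omega)
          (by omega) hprev h2
        have e : 2 + 0 * (2 * k - 1) + y' * (2 * k * k + k - 2) + k * (2 * k + 1) - 2
            = 2 + 0 * (2 * k - 1) + (y' + 1) * (2 * k * k + k - 2) := by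
          have hs := Nat.succ_mul y' (2 * k * k + k - 2)
          generalize y' * (2 * k * k + k - 2) = t at hs ⊢
          rw [hs]
          omega
        rw [e] at hcomb
        exact hcomb
      · obtain ⟨x', rfl⟩ : ∃ x', x = x' + 1 := ⟨x - 1, by omega⟩
        have hprev := ih (n - 1) (by omega) x' y (by omega) (by omega)
        have hcomb := rainbow_combine col hsym
          (a := 2 + x' * (2 * k - 1) + y * (2 * k * k + k - 2)) (b := 2 * k + 1)
          (by
            rcases Nat.eq_zero_or_pos x' with rfl | hx'
            · have hy1 : 1 ≤ y := by omega
              have h1' : 1 * (2 * k * k + k - 2) ≤ y * (2 * k * k + k - 2) :=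
                Nat.mul_le_mul hy1 (le_refl _)
              rw [Nat.one_mul] at h1'
              omega
            · have h1' : 0 < x' * (2 * k - 1) := Nat.mul_pos hx' (by omega)
              omega)
          (by omega) hprev h1
        have e : 2 + x' * (2 * k - 1) + y * (2 * k * k + k - 2) + (2 * k + 1) - 2
            = 2 + (x' + 1) * (2 * k - 1) + y * (2 * k * k + k - 2) := by
          have hs := Nat.succ_mul x' (2 * k - 1)
          generalize y * (2 * k * k + k - 2) = u
          generalize x' * (2 * k - 1) = t at hs ⊢
          rw [hs]
          omega
        rw [e] at hcomb
        exact hcomb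

/-- If a symmetric edge-coloring contains no rainbow `(2k+1)`-cycle and no rainbow
`k(2k+1)`-cycle (`k ≥ 1`), then it contains no rainbow `M`-cycle for all
`M ≥ 4k³ - 2k² - 8k + 8`. -/
theorem no_rainbow_monoid_bound {V C : Type*} (col : V → V → C)
    (hsym : ∀ x y, col x y = col y x) (k : ℕ) (hk : 1 ≤ k)
    (h1 : ¬ ContainsRainbowCycle col (2 * k + 1))
    (h2 : ¬ ContainsRainbowCycle col (k * (2 * k + 1))) :
    ∀ M : ℕ, 4 * (k : ℤ) ^ 3 - 2 * (k : ℤ) ^ 2 - 8 * (k : ℤ) + 8 ≤ (M : ℤ) →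
      ¬ ContainsRainbowCycle col M := by
  intro M hM
  obtain ⟨q, hq⟩ : ∃ q, 2 * k * k + k = q := ⟨_, rfl⟩
  have hkZ : (1 : ℤ) ≤ (k : ℤ) := by exact_mod_cast hk
  have hqZ : (q : ℤ) = 2 * (k : ℤ) * k + k := by
    rw [← hq]; push_cast; ring
  have hq3 : 3 ≤ q := by
    have h : 1 * 3 ≤ k * (2 * k + 1) := Nat.mul_le_mul hk (by omega)
    have h2' : k * (2 * k + 1) = q := by rw [← hq]; ring
    omega
  -- M ≥ 2
  have hM2 : 2 ≤ M := by
    have hfact : (0 : ℤ) ≤ 2 * ((k : ℤ) - 1) ^ 2 * (2 * (k : ℤ) + 3) := by positivity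
    have hident : 4 * (k : ℤ) ^ 3 - 2 * (k : ℤ) ^ 2 - 8 * (k : ℤ) + 8 - 2
        = 2 * ((k : ℤ) - 1) ^ 2 * (2 * (k : ℤ) + 3) := by ring
    have : (2 : ℤ) ≤ (M : ℤ) := by linarith
    exact_mod_cast this
  rcases eq_or_lt_of_le hM2 with hM2' | hM3
  · rw [← hM2']
    exact aux_not_crc_two col hsym
  -- now M ≥ 3
  have hM3' : 3 ≤ M := hM3
  -- key nat inequality : (2k-2)*(q-3) + 2 ≤ M
  have hMge : (2 * k - 2) * (q - 3) + 2 ≤ M := by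
    zify [show 2 ≤ 2 * k by omega, hq3]
    rw [hqZ]
    have hident : (2 * (k : ℤ) - 2) * ((2 * (k : ℤ) * k + k) - 3) + 2
        = 4 * (k : ℤ) ^ 3 - 2 * (k : ℤ) ^ 2 - 8 * (k : ℤ) + 8 := by ring
    linarith [hM, hident]
  -- representation of M - 2
  have hex : ∃ x y : ℕ, x * (2 * k - 1) + y * (q - 2) = M - 2 := by
    rcases eq_or_lt_of_le hk with hk1 | hk2
    · refine ⟨M - 2, 0, ?_⟩
      rw [← hk1]
      norm_num
    · have ha2 : 1 < 2 * k - 1 := by omega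
      have hq10 : 10 ≤ q := by
        have h : 2 * 5 ≤ k * (2 * k + 1) := Nat.mul_le_mul (by omega) (by omega)
        have h2' : k * (2 * k + 1) = q := by rw [← hq]; ring
        omega
      have hb2 : 1 < q - 2 := by omega
      have cop : Nat.Coprime (2 * k - 1) (q - 2) := by
        rw [← Nat.isCoprime_iff_coprime]
        refine ⟨(k : ℤ) + 1, -1, ?_⟩
        have c1 : ((2 * k - 1 : ℕ) : ℤ) = 2 * (k : ℤ) - 1 := by
          have h : 1 ≤ 2 * k := by omega
          push_cast [h]
          ring
        have c2 : ((q - 2 : ℕ) : ℤ) = (q : ℤ) - 2 := by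
          have h : 2 ≤ q := by omega
          push_cast [h]
          ring
        rw [c1, c2, hqZ]
        ring
      have hfrob := frobeniusNumber_pair cop ha2 hb2
      have hF : (2 * k - 1) * (q - 2) - (2 * k - 1) - (q - 2) < M - 2 := by
        obtain ⟨A', hA'⟩ : ∃ t, 2 * k - 1 = t + 1 := ⟨2 * k - 2, by omega⟩
        obtain ⟨B', hB'⟩ : ∃ t, q - 2 = t + 1 := ⟨q - 3, by omega⟩
        have eA : 2 * k - 2 = A' := by omega
        have eB : q - 3 = B' := by omega
        rw [eA, eB] at hMge
        rw [hA', hB', show (A' + 1) * (B' + 1) = A' * B' + A' + B' + 1 from by ring]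
        generalize A' * B' = t at hMge ⊢
        omega
      have hmem : M - 2 ∈ AddSubmonoid.closure ({2 * k - 1, q - 2} : Set ℕ) := by
        by_contra hcon
        exact absurd (hfrob.2 hcon) (not_le.mpr hF)
      rw [AddSubmonoid.mem_closure_pair] at hmem
      obtain ⟨x, y, hxy⟩ := hmem
      exact ⟨x, y, by simpa [smul_eq_mul] using hxy⟩
  obtain ⟨x, y, hrep⟩ := hex
  have hpos : 1 ≤ x + y := by
    by_contra hcon
    push_neg at hcon
    have hx0 : x = 0 := by omega
    have hy0 : y = 0 := by omega
    rw [hx0, hy0] at hrep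
    simp at hrep
    omega
  have H := closure_aux col hsym k hk h1 h2 (x + y) x y rfl hpos
  have e : 2 + x * (2 * k - 1) + y * (2 * k * k + k - 2) = M := by
    rw [hq]
    generalize x * (2 * k - 1) = t at hrep ⊢
    generalize y * (q - 2) = u at hrep ⊢
    omega
  rw [e] at H
  exact H
end

section
/- Let k ≥ 2 and set n = 2k+1, m₁ = k(2k+1), and m₂ = 6k−3. If an edge-coloring of a complete graph contains no rainbow n-cycle, no rainbow m₁-cycle, and no rainbow m₂-cycle, then it contains no rainbow M-cycle for every integer M ≥ 8k² − 8k + 12. -/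
lemma shortcut {V C : Type*} (col : V → V → C)
    (hsym : ∀ x y, col x y = col y x) {s L : ℕ} (hs : 3 ≤ s) (hL : s + 1 ≤ L)
    (hno : ¬ ContainsRainbowCycle col s)
    (h : ContainsRainbowCycle col L) : ContainsRainbowCycle col (L - s + 2) := by
  obtain ⟨v, hv, he⟩ := h
  have hL0 : 0 < L := by omega
  set e : Fin L → C := fun i : Fin L =>
      col (v i) (v ⟨(i.val + 1) % L, Nat.mod_lt _ i.pos⟩) with he_def
  have he_eq : ∀ (a : ℕ) (h1 : a < L) (b : ℕ) (h2 : b < L) (hab : b = (a+1) % L),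
      col (v ⟨a, h1⟩) (v ⟨b, h2⟩) = e ⟨a, h1⟩ := by
    intro a h1 b h2 hab
    rw [he_def]
    exact congrArg₂ col rfl (congrArg v (Fin.ext hab))
  -- the chord color
  set χ : C := col (v ⟨0, hL0⟩) (v ⟨s - 1, by omega⟩) with hχ
  by_cases hcase : ∃ j : Fin L, j.val + 1 < s ∧ χ = e j
  · -- build the long cycle of length N = L - s + 2
    obtain ⟨j, hj1, hj2⟩ := hcase
    set N : ℕ := L - s + 2 with hN
    have hN3 : 3 ≤ N := by omega
    have hbnd : ∀ i : Fin N, s - 2 + i.val < L := by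
      intro i; have := i.isLt; omega
    set w : Fin N → V := fun i : Fin N =>
      if h0 : i.val = 0 then v ⟨0, hL0⟩ else v ⟨s - 2 + i.val, hbnd i⟩ with hw_def
    have hw0 : ∀ (i : Fin N), i.val = 0 → w i = v ⟨0, hL0⟩ := by
      intro i h0; rw [hw_def]; simp only [h0]; rfl
    have hwpos : ∀ (i : Fin N), i.val ≠ 0 → w i = v ⟨s - 2 + i.val, hbnd i⟩ := by
      intro i h0; rw [hw_def]; simp only [h0]; rfl
    refine ⟨w, ?_, ?_⟩
    · intro i₁ i₂ hw
      by_cases h1 : i₁.val = 0 <;> by_cases h2 : i₂.val = 0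
      · exact Fin.ext (by omega)
      · rw [hw0 i₁ h1, hwpos i₂ h2] at hw
        have := congrArg Fin.val (hv hw)
        simp only [Fin.val_mk] at this
        omega
      · rw [hwpos i₁ h1, hw0 i₂ h2] at hw
        have := congrArg Fin.val (hv hw)
        simp only [Fin.val_mk] at this
        omega
      · rw [hwpos i₁ h1, hwpos i₂ h2] at hw
        have := congrArg Fin.val (hv hw)
        simp only [Fin.val_mk] at this
        exact Fin.ext (by omega)
    · -- edge injectivity
      have key : ∀ i : Fin N,
          col (w i) (w ⟨(i.val + 1) % N, Nat.mod_lt _ i.pos⟩)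
          = if i.val = 0 then χ else e ⟨s - 2 + i.val, hbnd i⟩ := by
        intro i
        by_cases h0 : i.val = 0
        · have h1 : (i.val + 1) % N = 1 := by
            rw [h0]; exact Nat.mod_eq_of_lt (by omega)
          rw [if_pos h0, hw0 i h0,
            hwpos ⟨(i.val + 1) % N, Nat.mod_lt _ i.pos⟩ (by simp [h1]),
            hχ]
          exact congrArg₂ col rfl (congrArg v (Fin.ext (by simp [h1]; omega)))
        · rw [if_neg h0, hwpos i h0]
          by_cases hlast : i.val = N - 1
          · have h1 : (i.val + 1) % N = 0 := by
              rw [hlast, Nat.sub_add_cancel (by omega), Nat.mod_self]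
            rw [hw0 ⟨(i.val + 1) % N, Nat.mod_lt _ i.pos⟩ (by simp [h1])]
            refine he_eq _ _ _ _ ?_
            have h2 : s - 2 + i.val + 1 = L := by omega
            rw [h2, Nat.mod_self]
          · have hilt : i.val < N - 1 := by have := i.isLt; omega
            have h1 : (i.val + 1) % N = i.val + 1 :=
              Nat.mod_eq_of_lt (by omega)
            rw [hwpos ⟨(i.val + 1) % N, Nat.mod_lt _ i.pos⟩ (by simp [h1])]
            refine Eq.trans ?_ (he_eq (s - 2 + i.val) _ (s - 2 + ((i.val+1) % N))
              (by omega) ?_)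
            · rfl
            · rw [h1, Nat.mod_eq_of_lt (show s - 2 + i.val + 1 < L by omega)]
              omega
      intro i₁ i₂ hg
      simp only at hg
      rw [key i₁, key i₂] at hg
      by_cases h1 : i₁.val = 0 <;> by_cases h2 : i₂.val = 0
      · exact Fin.ext (by omega)
      · rw [if_pos h1, if_neg h2] at hg
        have := congrArg Fin.val (he (hj2.symm.trans hg))
        simp only [Fin.val_mk] at this
        omega
      · rw [if_neg h1, if_pos h2] at hg
        have := congrArg Fin.val (he (hj2.symm.trans hg.symm))
        simp only [Fin.val_mk] at this
        omega
      · rw [if_neg h1, if_neg h2] at hg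
        have := congrArg Fin.val (he hg)
        simp only [Fin.val_mk] at this
        exact Fin.ext (by omega)
  · -- otherwise the initial segment is a rainbow s-cycle: contradiction
    exfalso
    apply hno
    push_neg at hcase
    have hs0 : 0 < s := by omega
    set u : Fin s → V := fun i : Fin s => v ⟨i.val, by omega⟩ with hu_def
    refine ⟨u, ?_, ?_⟩
    · intro i₁ i₂ hw
      rw [hu_def] at hw
      have := congrArg Fin.val (hv hw)
      simp only [Fin.val_mk] at this
      exact Fin.ext this
    · have key : ∀ i : Fin s,
          col (u i) (u ⟨(i.val + 1) % s, Nat.mod_lt _ i.pos⟩)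
          = if h' : i.val + 1 < s then e ⟨i.val, by omega⟩ else χ := by
        intro i
        by_cases h' : i.val + 1 < s
        · have h1 : (i.val + 1) % s = i.val + 1 := Nat.mod_eq_of_lt h'
          rw [dif_pos h', hu_def]
          refine he_eq _ _ _ _ ?_
          show (i.val + 1) % s = (i.val + 1) % L
          rw [h1, Nat.mod_eq_of_lt (by omega)]
        · have hi : i.val = s - 1 := by have := i.isLt; omega
          have h1 : (i.val + 1) % s = 0 := by
            rw [hi, Nat.sub_add_cancel (by omega), Nat.mod_self]
          rw [dif_neg h', hu_def, hχ, hsym]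
          exact congrArg₂ col (congrArg v (Fin.ext (by simp [h1])))
            (congrArg v (Fin.ext (by simp [hi])))
      intro i₁ i₂ hg
      simp only at hg
      rw [key i₁, key i₂] at hg
      by_cases h1 : i₁.val + 1 < s <;> by_cases h2 : i₂.val + 1 < s
      · rw [dif_pos h1, dif_pos h2] at hg
        have := congrArg Fin.val (he hg)
        simp only [Fin.val_mk] at this
        exact Fin.ext this
      · rw [dif_pos h1, dif_neg h2] at hg
        exact absurd hg.symm (hcase ⟨i₁.val, by omega⟩ (by simpa using h1))
      · rw [dif_neg h1, dif_pos h2] at hg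
        exact absurd hg (hcase ⟨i₂.val, by omega⟩ (by simpa using h2))
      · exact Fin.ext (by have := i₁.isLt; have := i₂.isLt; omega)

lemma iter_shortcut {V C : Type*} (col : V → V → C)
    (hsym : ∀ x y, col x y = col y x) {s : ℕ} (hs : 3 ≤ s)
    (hno : ¬ ContainsRainbowCycle col s) :
    ∀ (x B : ℕ), 3 ≤ B → ContainsRainbowCycle col (B + x * (s - 2)) →
      ContainsRainbowCycle col B := by
  intro x
  induction x with
  | zero => intro B _ h; simpa using h
  | succ n ih =>
    intro B hB h
    refine ih B hB ?_
    have hx : (n + 1) * (s - 2) = n * (s - 2) + (s - 2) := by ring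
    have h1 : s + 1 ≤ B + (n + 1) * (s - 2) := by omega
    have h2 := shortcut col hsym hs h1 hno h
    have h3 : B + (n + 1) * (s - 2) - s + 2 = B + n * (s - 2) := by omega
    rwa [h3] at h2

/-- If a symmetric edge-coloring contains no rainbow `(2k+1)`-cycle, no rainbow
`k(2k+1)`-cycle, and no rainbow `(6k-3)`-cycle (`k ≥ 2`), then it contains no rainbow
`M`-cycle for all `M ≥ 8k² - 8k + 12`. -/
theorem no_rainbow_adhoc_bound {V C : Type*} (col : V → V → C)
    (hsym : ∀ x y, col x y = col y x) (k : ℕ) (hk : 2 ≤ k)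
    (h1 : ¬ ContainsRainbowCycle col (2 * k + 1))
    (h2 : ¬ ContainsRainbowCycle col (k * (2 * k + 1)))
    (h3 : ¬ ContainsRainbowCycle col (6 * k - 3)) :
    ∀ M : ℕ, 8 * (k : ℤ) ^ 2 - 8 * (k : ℤ) + 12 ≤ (M : ℤ) →
      ¬ ContainsRainbowCycle col M := by
  obtain ⟨j, rfl⟩ : ∃ j, k = j + 2 := ⟨k - 2, by omega⟩
  intro M hM hcrc
  -- clean up the forbidden lengths
  have hn : 2 * (j + 2) + 1 = 2 * j + 5 := by ring
  have hm1 : (j + 2) * (2 * (j + 2) + 1) = 2 * j ^ 2 + 9 * j + 10 := by ring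
  have hm2 : 6 * (j + 2) - 3 = 6 * j + 9 := by omega
  rw [hn] at h1; rw [hm1] at h2; rw [hm2] at h3
  -- the bound in ℕ
  have hMn : 8 * j ^ 2 + 24 * j + 28 ≤ M := by
    have : ((8 * j ^ 2 + 24 * j + 28 : ℕ) : ℤ)
        = 8 * ((j : ℤ) + 2) ^ 2 - 8 * ((j : ℤ) + 2) + 12 := by push_cast; ring
    have h := hM
    push_cast at h ⊢
    nlinarith
  set q : ℕ := M / (2 * j + 3) with hq_def
  set r : ℕ := M % (2 * j + 3) with hr_def
  have hqr : 2 * j + 3 > 0 := by omega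
  have hMeq : (2 * j + 3) * q + r = M := Nat.div_add_mod M (2 * j + 3)
  have hrlt : r < 2 * j + 3 := Nat.mod_lt _ hqr
  have hq : 4 * j + 6 ≤ q := by
    by_contra hq
    push_neg at hq
    nlinarith
  -- the two iteration principles we use
  have iterA := iter_shortcut col hsym (s := 2 * j + 5) (by omega) h1
  have iterC := iter_shortcut col hsym (s := 6 * j + 9) (by omega) h3
  have hsA : 2 * j + 5 - 2 = 2 * j + 3 := by omega
  have hsC : 6 * j + 9 - 2 = 6 * j + 7 := by omega
  rw [hsA] at iterA; rw [hsC] at iterC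
  rcases Nat.even_or_odd r with hpar | hpar
  · rcases Nat.eq_zero_or_pos r with h0 | hpos
    · -- r = 0 : reduce to the (6j+9)-cycle directly
      obtain ⟨x, hx⟩ : ∃ x, q = x + 3 := ⟨q - 3, by omega⟩
      have hrep : M = (6 * j + 9) + x * (2 * j + 3) := by
        rw [← hMeq, h0, hx]; ring
      exact h3 (iterA x (6 * j + 9) (by omega) (by rwa [← hrep]))
    · -- r even and positive : reduce via m₁ = 2j²+9j+10
      obtain ⟨v, u, hr2, hju⟩ : ∃ v u, r = 2 * (v + 1) ∧ j = v + u := by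
        obtain ⟨t, ht⟩ := hpar
        exact ⟨t - 1, j + 1 - t, by omega, by omega⟩
      obtain ⟨x, hx⟩ : ∃ x, q = x + (v + 4 * u + 5) := ⟨q - (v + 4 * u + 5), by omega⟩
      have hrep : M = ((2 * j ^ 2 + 9 * j + 10) + x * (2 * j + 3))
          + (u + 1) * (6 * j + 7) := by
        rw [← hMeq, hr2, hx, hju]; ring
      have step1 := iterC (u + 1) ((2 * j ^ 2 + 9 * j + 10) + x * (2 * j + 3))
        (by omega) (by rwa [← hrep])
      exact h2 (iterA x (2 * j ^ 2 + 9 * j + 10) (by nlinarith) step1)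
  · -- r odd : reduce via m₂ = 6j+9
    obtain ⟨t, u, hr2, hju⟩ : ∃ t u, r = 2 * t + 1 ∧ j = t + u := by
      obtain ⟨t, ht⟩ := hpar
      exact ⟨t, j - t, by omega, by omega⟩
    obtain ⟨x, hx⟩ : ∃ x, q = x + (3 * u + 5) := ⟨q - (3 * u + 5), by omega⟩
    have hrep : M = ((6 * j + 9) + x * (2 * j + 3)) + (u + 1) * (6 * j + 7) := by
      rw [← hMeq, hr2, hx, hju]; ring
    have step1 := iterC (u + 1) ((6 * j + 9) + x * (2 * j + 3))
      (by omega) (by rwa [← hrep])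
    exact h3 (iterA x (6 * j + 9) (by omega) step1)
end

section
/- Let S be a submonoid of the natural numbers under addition, and suppose S contains integers a < b < c where a ≥ 3 is odd, b ≡ −2 (mod a), and c ≡ −1 (mod a). Then S contains every integer greater than or equal to ab/2 − a − 3b/2 + c + 1 (equivalently, every integer N with 2N ≥ ab − 2a − 3b + 2c + 2). -/
/-- Frobenius-type claim: if an additive submonoid of `ℕ` contains `a < b < c` with
`a ≥ 3` odd, `b ≡ -2 (mod a)` and `c ≡ -1 (mod a)`, then it contains every integer `N`
with `N ≥ ab/2 - a - 3b/2 + c + 1`, i.e. with `2N ≥ ab - 2a - 3b + 2c + 2`. -/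
theorem submonoid_frobenius_three (S : AddSubmonoid ℕ) (a b c : ℕ)
    (ha : a ∈ S) (hb : b ∈ S) (hc : c ∈ S)
    (hab : a < b) (hbc : b < c) (ha3 : 3 ≤ a) (haodd : Odd a)
    (hbmod : a ∣ b + 2) (hcmod : a ∣ c + 1) :
    ∀ N : ℕ, (a : ℤ) * b - 2 * a - 3 * b + 2 * c + 2 ≤ 2 * (N : ℤ) → N ∈ S := by
  intro N hN
  have ha0 : 0 < a := by omega
  set t : ℕ := (a - N % a) % a with ht
  have htlt : t < a := Nat.mod_lt _ ha0
  have hNdec := Nat.mod_add_div N a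
  have hmodlt : N % a < a := Nat.mod_lt _ ha0
  -- a ∣ N + t
  have hNt : a ∣ N + t := by
    rcases Nat.eq_zero_or_pos (N % a) with h | h
    · have ht0 : t = 0 := by
        rw [ht, h, Nat.sub_zero, Nat.mod_self]
      refine ⟨N / a, by omega⟩
    · have ht1 : t = a - N % a := by
        rw [ht]; exact Nat.mod_eq_of_lt (by omega)
      refine ⟨N / a + 1, ?_⟩
      rw [Nat.mul_add, Nat.mul_one]
      omega
  set y : ℕ := t / 2 with hy
  set z : ℕ := t % 2 with hz
  have h2yz : 2 * y + z = t := by omega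
  have hz1 : z ≤ 1 := by omega
  -- a ∣ cost + t where cost = y*b + z*c
  have hcost : a ∣ y * b + z * c + t := by
    have heq : y * (b + 2) + z * (c + 1) = y * b + z * c + (2 * y + z) := by ring
    have : a ∣ y * (b + 2) + z * (c + 1) :=
      dvd_add (Dvd.dvd.mul_left hbmod y) (Dvd.dvd.mul_left hcmod z)
    rwa [heq, h2yz] at this
  -- integer divisibility of N - cost
  have hdvdZ : (a : ℤ) ∣ (N : ℤ) - (y * b + z * c) := by
    have h1 : (a : ℤ) ∣ (N : ℤ) + t := by exact_mod_cast hNt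
    have h2 : (a : ℤ) ∣ ((y : ℤ) * b + z * c + t) := by exact_mod_cast hcost
    have := dvd_sub h1 h2
    have heq : ((N : ℤ) + t) - ((y : ℤ) * b + z * c + t) = (N : ℤ) - (y * b + z * c) := by
      ring
    rwa [heq] at this
  -- inequality: 2*(N - cost) > -2a
  have haodd' : a % 2 = 1 := Nat.odd_iff.mp haodd
  have hineq : -2 * (a : ℤ) < 2 * ((N : ℤ) - (y * b + z * c)) := by
    have h2y : (2 * y : ℤ) + z = t := by exact_mod_cast h2yz
    interval_cases z
    · -- z = 0, t = 2y, t ≤ a - 1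
      have htle : (t : ℤ) ≤ (a : ℤ) - 1 := by omega
      have hmul : (2 * y : ℤ) * b ≤ ((a : ℤ) - 1) * b := by
        apply mul_le_mul_of_nonneg_right _ (by positivity)
        omega
      push_cast
      push_cast at hmul
      nlinarith [hN, (by exact_mod_cast hbc : (b : ℤ) < c)]
    · -- z = 1, t odd so t ≤ a - 2
      have htle : t ≤ a - 2 := by omega
      have htle' : (2 * y : ℤ) ≤ (a : ℤ) - 3 := by
        have : (t : ℤ) ≤ (a : ℤ) - 2 := by
          have : (t : ℤ) + 2 ≤ a := by exact_mod_cast (by omega : t + 2 ≤ a)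
          linarith
        linarith
      have hmul : (2 * y : ℤ) * b ≤ ((a : ℤ) - 3) * b := by
        apply mul_le_mul_of_nonneg_right htle' (by positivity)
      push_cast
      push_cast at hmul
      nlinarith [hN]
  -- conclude N - cost = a * m with m ≥ 0
  obtain ⟨m, hm⟩ := hdvdZ
  have hm0 : 0 ≤ m := by
    by_contra h
    push_neg at h
    have hm1 : m ≤ -1 := by omega
    have : (a : ℤ) * m ≤ (a : ℤ) * (-1) :=
      mul_le_mul_of_nonneg_left hm1 (by exact_mod_cast ha0.le)
    rw [hm] at hineq
    nlinarith
  set k : ℕ := m.toNat with hk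
  have hmk : (m : ℤ) = (k : ℤ) := by simp [hk, Int.toNat_of_nonneg hm0]
  have hNeq : N = y * b + z * c + a * k := by
    have : (N : ℤ) = (y : ℤ) * b + z * c + a * k := by
      rw [← hmk]; linarith [hm]
    exact_mod_cast this
  have hyb : y * b ∈ S := by simpa [smul_eq_mul] using S.nsmul_mem hb y
  have hzc : z * c ∈ S := by simpa [smul_eq_mul] using S.nsmul_mem hc z
  have hak : a * k ∈ S := by
    have := S.nsmul_mem ha k
    simpa [smul_eq_mul, mul_comm] using this
  rw [hNeq]
  exact add_mem (add_mem hyb hzc) hak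
end

section
/- There exists an edge-coloring of the complete graph on the positive integers that contains a rainbow k-cycle for every odd integer k ≥ 3 but contains no rainbow cycle of any even length. -/
/-!
Colour an edge joining vertices of opposite parity by its smaller endpoint, and give all edges
joining vertices of equal parity one common extra colour. For odd `k` the cycle `1, 2, …, k` is
rainbow: its only equal-parity edge is `{k, 1}`. Along any cycle the parity of the vertices changes
an even number of times, so a cycle of even length has an even number of equal-parity edges; a
rainbow one has at most one, hence none. But then the smallest vertex of the cycle gives both of
its edges the same colour, namely itself.
-/

open Finset Function

section Cycles

variable {V C : Type*} {n : ℕ}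

lemma val_finRotate (i : Fin n) : (finRotate n i : ℕ) = (i + 1) % n := by
  obtain ⟨m, rfl⟩ := Nat.exists_eq_succ_of_ne_zero i.pos.ne'
  rw [coe_finRotate]
  split_ifs with h
  · simp [h]
  · exact (Nat.mod_eq_of_lt (by simpa using Fin.val_lt_last h)).symm

lemma isRainbowCycle_iff {col : V → V → C} {v : Fin n → V} :
    IsRainbowCycle col v ↔
      Injective v ∧ Injective (fun i ↦ col (v i) (v (finRotate n i))) := by
  have hsucc (i : Fin n) : finRotate n i = ⟨(i + 1) % n, Nat.mod_lt _ i.pos⟩ :=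
    Fin.ext (val_finRotate i)
  simp only [IsRainbowCycle, hsucc]

end Cycles

lemma even_card_even_add_comp_perm {ι : Type*} [Fintype ι] (hι : Even (Fintype.card ι))
    (σ : Equiv.Perm ι) (f : ι → ℕ) : Even #{i | Even (f i + f (σ i))} := by
  have hodd : Even #{i | Odd (f i + f (σ i))} := by
    rw [← even_sum_iff_even_card_odd, sum_add_distrib, Equiv.sum_comp σ f]
    exact ⟨_, rfl⟩
  have hsplit := card_filter_add_card_filter_not (s := univ) (fun i ↦ Even (f i + f (σ i)))
  simp only [Nat.not_even_iff_odd, card_univ] at hsplit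
  rw [← hsplit] at hι
  exact (Nat.even_add.mp hι).mpr hodd

lemma not_injective_min_comp_perm {ι α : Type*} [Finite ι] [Nonempty ι] [LinearOrder α]
    {σ : Equiv.Perm ι} (hσ : ∀ i, σ i ≠ i) (v : ι → α) :
    ¬ Injective (fun i ↦ min (v i) (v (σ i))) := by
  obtain ⟨m, hm⟩ := Finite.exists_min v
  intro hinj
  have hpred : σ.symm m = m := hinj <| by
    simp only [Equiv.apply_symm_apply, min_eq_right (hm _), min_eq_left (hm _)]
  exact hσ m (by simpa using congrArg σ hpred.symm)

def parityMinCol (x y : ℕ+) : Option ℕ+ :=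
  if Odd ((x : ℕ) + y) then some (min x y) else none

lemma parityMinCol_comm (x y : ℕ+) : parityMinCol x y = parityMinCol y x := by
  rw [parityMinCol, parityMinCol, add_comm, min_comm]

lemma parityMinCol_eq_none_iff {x y : ℕ+} : parityMinCol x y = none ↔ Even ((x : ℕ) + y) := by
  simp [parityMinCol]

lemma parityMinCol_of_odd {x y : ℕ+} (h : Odd ((x : ℕ) + y)) :
    parityMinCol x y = some (min x y) :=
  if_pos h

lemma containsRainbowCycle_parityMinCol {k : ℕ} (hodd : Odd k) :
    ContainsRainbowCycle parityMinCol k := by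
  obtain ⟨m, rfl⟩ := Nat.exists_eq_succ_of_ne_zero hodd.pos.ne'
  let v : Fin (m + 1) → ℕ+ := fun i ↦ Nat.succPNat i
  have hv : Injective v := fun i j h ↦ Fin.ext (Nat.succPNat_inj.mp h)
  have hcolor (i : Fin (m + 1)) : parityMinCol (v i) (v (finRotate _ i)) =
      if i = Fin.last m then none else some (v i) := by
    split_ifs with hi
    · subst hi
      rw [finRotate_last, parityMinCol_eq_none_iff]
      simpa [v, parity_simps] using hodd
    · have hsucc : (v (finRotate _ i) : ℕ) = v i + 1 := by
        simp only [v, Nat.succPNat_coe, coe_finRotate_of_ne_last hi]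
      rw [parityMinCol_of_odd (by rw [hsucc]; exact ⟨v i, by ring⟩), min_eq_left]
      exact PNat.coe_le_coe _ _ |>.mp (by omega)
  refine ⟨v, isRainbowCycle_iff.mpr ⟨hv, fun i j h ↦ ?_⟩⟩
  simp only [hcolor] at h
  split_ifs at h with hi hj hj
  · exact hi.trans hj.symm
  · exact hv (Option.some_injective _ h)

lemma not_containsRainbowCycle_parityMinCol {k : ℕ} (hk : 2 ≤ k) (heven : Even k) :
    ¬ ContainsRainbowCycle parityMinCol k := by
  rintro ⟨v, hrainbow⟩
  obtain ⟨-, hcol⟩ := isRainbowCycle_iff.mp hrainbow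
  set σ := finRotate k
  have hmono : #{i | Even ((v i : ℕ) + v (σ i))} ≤ 1 := by
    refine card_le_one.mpr fun i hi j hj ↦ hcol ?_
    simp only [mem_filter, mem_univ, true_and] at hi hj
    simp only [parityMinCol_eq_none_iff.mpr hi, parityMinCol_eq_none_iff.mpr hj]
  have hall_odd : ∀ i, Odd ((v i : ℕ) + v (σ i)) := by
    obtain ⟨a, ha⟩ := even_card_even_add_comp_perm (by simpa using heven) σ (fun i ↦ (v i : ℕ))
    have hzero : #{i | Even ((v i : ℕ) + v (σ i))} = 0 := by omega
    intro i
    simpa using filter_eq_empty_iff.mp (card_eq_zero.mp hzero) (mem_univ i)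
  have : Nonempty (Fin k) := ⟨⟨0, by omega⟩⟩
  have hfix : ∀ i, σ i ≠ i := fun i ↦
    Equiv.Perm.mem_support.mp (by simp [σ, support_finRotate_of_le hk])
  refine not_injective_min_comp_perm hfix v fun i j h ↦ hcol ?_
  simp only [parityMinCol_of_odd (hall_odd _)]
  exact congrArg some h

/-- There is a symmetric edge-coloring of the complete graph on the positive integers
containing rainbow `k`-cycles for all odd `k ≥ 3` but no even-length rainbow cycles. -/
theorem exists_coloring_odd_only : ∃ (C : Type) (col : ℕ+ → ℕ+ → C),
    (∀ x y, col x y = col y x) ∧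
    (∀ k : ℕ, 3 ≤ k → Odd k → ContainsRainbowCycle col k) ∧
    (∀ k : ℕ, 3 ≤ k → Even k → ¬ ContainsRainbowCycle col k) :=
  ⟨Option ℕ+, parityMinCol, parityMinCol_comm,
    fun _ _ hodd ↦ containsRainbowCycle_parityMinCol hodd,
    fun _ hk heven ↦ not_containsRainbowCycle_parityMinCol (by omega) heven⟩
end

section
/- For every integer n ≥ 3 there exists an edge-coloring of the complete graph on n vertices that contains a rainbow k-cycle for every odd integer k with 3 ≤ k ≤ n but contains no rainbow cycle of any even length. -/
/-- Auxiliary coloring: same parity → one common color, otherwise the max endpoint. -/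
def myCol (n : ℕ) (x y : Fin n) : Option (Fin n) :=
  if ((x : ℕ) : ZMod 2) = ((y : ℕ) : ZMod 2) then none else some (max x y)

lemma idx_succ {k : ℕ} [NeZero k] (hk : 2 ≤ k) (i : Fin k) :
    (⟨(i.val + 1) % k, Nat.mod_lt _ i.pos⟩ : Fin k) = i + 1 := by
  apply Fin.ext
  simp [Fin.add_def, Fin.val_one', Nat.mod_eq_of_lt (show 1 < k by omega)]

lemma zmod2_ne_add_one : ∀ a : ZMod 2, a ≠ a + 1 := by decide

lemma zmod2_pair : ∀ a b : ZMod 2, a + b = if a = b then 0 else 1 := by decide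

/-- For every `n ≥ 3` there is a symmetric edge-coloring of the complete graph on `n`
vertices containing rainbow `k`-cycles for all odd `3 ≤ k ≤ n` but no even-length
rainbow cycles. -/
theorem exists_finite_coloring_odd_only : ∀ n : ℕ, 3 ≤ n →
    ∃ (C : Type) (col : Fin n → Fin n → C),
      (∀ x y, col x y = col y x) ∧
      (∀ k : ℕ, 3 ≤ k → k ≤ n → Odd k → ContainsRainbowCycle col k) ∧
      (∀ k : ℕ, 3 ≤ k → Even k → ¬ ContainsRainbowCycle col k) := by
  intro n hn
  refine ⟨Option (Fin n), myCol n, ?_, ?_, ?_⟩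
  · -- symmetry
    intro x y
    unfold myCol
    by_cases h : ((x : ℕ) : ZMod 2) = ((y : ℕ) : ZMod 2)
    · rw [if_pos h, if_pos h.symm]
    · rw [if_neg h, if_neg (Ne.symm h), max_comm]
  · -- rainbow odd cycles
    intro k hk3 hkn hodd
    refine ⟨Fin.castLE hkn, Fin.castLE_injective hkn, ?_⟩
    have key : ∀ i : Fin k,
        myCol n (Fin.castLE hkn i)
          (Fin.castLE hkn ⟨(i.val + 1) % k, Nat.mod_lt _ i.pos⟩) =
        if h : i.val = k - 1 then none
          else some ⟨i.val + 1, by have := i.isLt; omega⟩ := by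
      intro i
      by_cases hi : i.val = k - 1
      · have h1 : (i.val + 1) % k = 0 := by
          have h2 : i.val + 1 = k := by have := i.isLt; omega
          simp [h2]
        rw [dif_pos hi]
        obtain ⟨m, hm⟩ := hodd
        have hval : (i.val : ℕ) = 2 * m := by omega
        unfold myCol
        rw [if_pos]
        simp only [Fin.coe_castLE, h1, hval]
        have h3 : (2 * m + 1) % k = 0 := by rw [hm]; exact Nat.mod_self _
        rw [h3, Nat.cast_zero]
        exact (ZMod.natCast_eq_zero_iff _ 2).mpr ⟨m, rfl⟩
      · have hlt : i.val + 1 < k := by have := i.isLt; omega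
        have h1 : (i.val + 1) % k = i.val + 1 := Nat.mod_eq_of_lt hlt
        rw [dif_neg hi]
        unfold myCol
        rw [if_neg, max_eq_right]
        · congr 1
          apply Fin.ext
          simp [Fin.castLE, h1]
        · simp only [Fin.castLE, h1]
          exact Fin.mk_le_mk.mpr (by omega)
        · simp only [Fin.castLE, h1]
          push_cast
          exact zmod2_ne_add_one _
    intro i j h
    simp only [key] at h
    apply Fin.ext
    by_cases h1 : i.val = k - 1 <;> by_cases h2 : j.val = k - 1
    · omega
    · rw [dif_pos h1, dif_neg h2] at h; exact absurd h (by simp)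
    · rw [dif_neg h1, dif_pos h2] at h; exact absurd h (by simp)
    · rw [dif_neg h1, dif_neg h2, Option.some_inj, Fin.mk.injEq] at h; omega
  · -- no rainbow even cycles
    intro k hk3 heven hcon
    obtain ⟨v, hvinj, hcinj⟩ := hcon
    haveI : NeZero k := ⟨by omega⟩
    have hidx : ∀ i : Fin k,
        (⟨(i.val + 1) % k, Nat.mod_lt _ i.pos⟩ : Fin k) = i + 1 :=
      idx_succ (by omega)
    set g : Fin k → ZMod 2 := fun i => (((v i : Fin n) : ℕ) : ZMod 2) with hg
    set S : Finset (Fin k) := Finset.univ.filter (fun i => g i = g (i + 1)) with hS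
    have hcol_none : ∀ i ∈ S,
        myCol n (v i) (v ⟨(i.val + 1) % k, Nat.mod_lt _ i.pos⟩) = none := by
      intro i hi
      rw [hidx i]
      unfold myCol
      rw [if_pos]
      exact (Finset.mem_filter.mp hi).2
    have hcard_le : S.card ≤ 1 := by
      by_contra hlt
      obtain ⟨a, ha, b, hb, hab⟩ :=
        Finset.one_lt_card.mp (show 1 < S.card by omega)
      exact hab (hcinj (by simp only [hcol_none a ha, hcol_none b hb]))
    have hsum : ∑ i : Fin k, (g i + g (i + 1)) = 0 := by
      rw [Finset.sum_add_distrib]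
      have h1 : ∑ i : Fin k, g (i + 1) = ∑ i : Fin k, g i :=
        Fintype.sum_equiv (Equiv.addRight (1 : Fin k)) _ _ (fun i => rfl)
      rw [h1, ← two_mul]
      have h2 : (2 : ZMod 2) = 0 := by decide
      rw [h2, zero_mul]
    have hsum2 : ∑ i : Fin k, (g i + g (i + 1)) =
        ((Finset.univ.filter (fun i : Fin k => ¬ g i = g (i + 1))).card : ZMod 2) := by
      have h1 : ∀ i : Fin k, g i + g (i + 1) =
          if g i = g (i + 1) then (0 : ZMod 2) else 1 := fun i => zmod2_pair _ _
      rw [Finset.sum_congr rfl (fun i _ => h1 i), Finset.sum_ite,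
        Finset.sum_const, Finset.sum_const, smul_zero, zero_add,
        nsmul_eq_mul, mul_one]
    have hdvd : 2 ∣ (Finset.univ.filter (fun i : Fin k => ¬ g i = g (i + 1))).card := by
      have h0 : ((Finset.univ.filter (fun i : Fin k => ¬ g i = g (i + 1))).card : ZMod 2) = 0 :=
        hsum2.symm.trans hsum
      exact (ZMod.natCast_eq_zero_iff _ 2).mp h0
    have hcards : S.card +
        (Finset.univ.filter (fun i : Fin k => ¬ g i = g (i + 1))).card = k := by
      rw [hS, Finset.card_filter_add_card_filter_not]
      exact Finset.card_fin k
    have hSeven : S = ∅ := by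
      obtain ⟨m, hm⟩ := heven
      exact Finset.card_eq_zero.mp (by omega)
    have hcross : ∀ i : Fin k, g i ≠ g (i + 1) := by
      intro i hi
      have hmem : i ∈ S := Finset.mem_filter.mpr ⟨Finset.mem_univ i, hi⟩
      rw [hSeven] at hmem
      exact absurd hmem (Finset.notMem_empty i)
    obtain ⟨i₀, hmax⟩ := Finite.exists_max v
    have e1 : myCol n (v (i₀ - 1)) (v ⟨((i₀ - 1).val + 1) % k, Nat.mod_lt _ (i₀ - 1).pos⟩) =
        some (v i₀) := by
      rw [hidx (i₀ - 1), sub_add_cancel]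
      unfold myCol
      rw [if_neg, max_eq_right (hmax _)]
      have h1 := hcross (i₀ - 1)
      rw [sub_add_cancel] at h1
      exact h1
    have e2 : myCol n (v i₀) (v ⟨(i₀.val + 1) % k, Nat.mod_lt _ i₀.pos⟩) = some (v i₀) := by
      rw [hidx i₀]
      unfold myCol
      rw [if_neg (hcross i₀), max_eq_left (hmax _)]
    have heq : i₀ - 1 = i₀ := hcinj (by simp only [e1, e2])
    have h2 : i₀ - 1 + 1 = i₀ + 1 := by rw [heq]
    rw [sub_add_cancel] at h2
    have h10 : (1 : Fin k) = 0 := left_eq_add.mp h2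
    have hfin : (1 % k : ℕ) = 0 := by
      rw [← Fin.val_one' k, h10, Fin.val_zero]
    rw [Nat.mod_eq_of_lt (show 1 < k by omega)] at hfin
    exact one_ne_zero hfin
end

section
/- Define an edge-coloring col of the complete graph on the positive integers with colors in the nonnegative integers by col(x,y) = 0 if y − x is even and col(x,y) = min(x,y) if y − x is odd (for distinct x, y). Then for every odd integer k ≥ 3, the cycle (1, 2, 3, …, k) is a rainbow k-cycle for col. -/
/-- The coloring of `Kₒₒ` on the positive integers: `0` if `y - x` is even,
`min x y` if `y - x` is odd. -/
def colParityMin : ℕ+ → ℕ+ → ℕ := fun x y =>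
  if ((y : ℤ) - (x : ℤ)) % 2 = 0 then 0 else min (x : ℕ) (y : ℕ)

/-- For every odd `k ≥ 3`, the cycle `(1, 2, …, k)` is a rainbow `k`-cycle
for `colParityMin`. -/
theorem colParityMin_rainbow_odd : ∀ k : ℕ, 3 ≤ k → Odd k →
    IsRainbowCycle colParityMin
      (fun i : Fin k => (⟨i.val + 1, Nat.succ_pos _⟩ : ℕ+)) := by
  intro k hk hodd
  obtain ⟨m, hm⟩ := hodd
  constructor
  · intro a b hab
    have : a.val + 1 = b.val + 1 := congrArg (fun x : ℕ+ => (x : ℕ)) hab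
    exact Fin.ext (by omega)
  · have key : ∀ i : Fin k,
        colParityMin (⟨i.val + 1, Nat.succ_pos _⟩)
          (⟨(i.val + 1) % k + 1, Nat.succ_pos _⟩)
          = if i.val + 1 = k then 0 else i.val + 1 := by
      intro i
      by_cases h : i.val + 1 = k
      · have : (i.val + 1) % k = 0 := by rw [h]; exact Nat.mod_self k
        simp only [colParityMin, this, h, PNat.mk_coe, if_true]
        have h0 : (0:ℕ)+1 = 1 := rfl
        have hz : ((1 : ℕ) : ℤ) - ((k : ℕ) : ℤ) = -(2 * m : ℤ) := by
          push_cast; omega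
        rw [Nat.mod_self, h0, hz]
        simp
      · have hlt : i.val + 1 < k := lt_of_le_of_ne i.isLt.nat_succ_le h
        have : (i.val + 1) % k = i.val + 1 := Nat.mod_eq_of_lt hlt
        simp only [colParityMin, this, h, if_neg h, PNat.mk_coe]
        have h2 : ((i.val + 1 + 1 : ℕ) : ℤ) - ((i.val + 1 : ℕ) : ℤ) = 1 := by
          push_cast; ring
        rw [h2]
        norm_num [Nat.min_def]
    intro a b hab
    simp only [key] at hab
    by_cases ha : a.val + 1 = k <;> by_cases hb : b.val + 1 = k <;>
      simp [ha, hb] at hab <;> exact Fin.ext (by omega)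
end

section
/- Define an edge-coloring col' of the complete graph on the positive integers with colors in the nonnegative integers by, for distinct x, y: col'(x,y) = 0 if y − x ≡ 0 (mod 2), col'(x,y) = x if y − x ≡ 1 (mod 4), and col'(x,y) = y if y − x ≡ −1 (mod 4). Then col' contains no rainbow 6-cycle. -/
/-- The coloring of `Kₒₒ` on the positive integers: `0` if `y - x ≡ 0 (mod 2)`,
`x` if `y - x ≡ 1 (mod 4)`, and `y` if `y - x ≡ -1 (mod 4)`. -/
def colMod4 : ℕ+ → ℕ+ → ℕ := fun x y =>
  if ((y : ℤ) - (x : ℤ)) % 2 = 0 then 0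
  else if ((y : ℤ) - (x : ℤ)) % 4 = 1 then (x : ℕ) else (y : ℕ)

/-- Cyclic successor on `Fin 6`. -/
def nxt6 (i : Fin 6) : Fin 6 := ⟨(i.val + 1) % 6, Nat.mod_lt _ i.pos⟩

/-- If a parity pattern around a 6-cycle has at most one non-change, it has none. -/
lemma key1 : ∀ p : Fin 6 → Bool,
    (∀ i j : Fin 6, p (nxt6 i) = p i → p (nxt6 j) = p j → i = j) →
    ∀ i : Fin 6, p (nxt6 i) ≠ p i := by decide

/-- If `i ↦ (i or i+1)` is injective on the 6-cycle, the choice is constant. -/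
lemma key2 : ∀ s : Fin 6 → Bool,
    Function.Injective (fun i : Fin 6 => if s i then i else nxt6 i) →
    (∀ i, s i = true) ∨ (∀ i, s i = false) := by decide

/-- The coloring `colMod4` contains no rainbow `6`-cycle. -/
theorem colMod4_no_rainbow_six : ¬ ContainsRainbowCycle colMod4 6 := by
  rintro ⟨v, hv, hc⟩
  -- the integer difference along each edge
  set e : Fin 6 → ℤ := fun i => ((v (nxt6 i) : ℕ) : ℤ) - ((v i : ℕ) : ℤ) with he
  have hcol : ∀ i : Fin 6, colMod4 (v i) (v (nxt6 i)) =
      (if (e i) % 2 = 0 then 0 else if (e i) % 4 = 1 then ((v i : ℕ)) else ((v (nxt6 i) : ℕ))) := by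
    intro i; rfl
  have hcinj : ∀ i j : Fin 6,
      colMod4 (v i) (v (nxt6 i)) = colMod4 (v j) (v (nxt6 j)) → i = j := by
    intro i j h
    exact hc h
  -- Step A: at most one even edge, via color 0
  have hA : ∀ i j : Fin 6, e i % 2 = 0 → e j % 2 = 0 → i = j := by
    intro i j hi hj
    apply hcinj
    rw [hcol i, hcol j, if_pos hi, if_pos hj]
  -- Step B: in fact all edges are odd
  have hodd : ∀ i : Fin 6, e i % 2 ≠ 0 := by
    have hp := key1 (fun i => decide ((v i : ℕ) % 2 = 0)) ?_
    · intro i hi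
      apply hp i
      simp only [he] at hi
      simp only [decide_eq_decide]
      omega
    · intro i j hi hj
      simp only [decide_eq_decide] at hi hj
      apply hA i j
      · simp only [he]
        omega
      · simp only [he]
        omega
  -- Step C: each color is the endpoint picked by the mod-4 residue; injectivity
  have hcolv : ∀ i : Fin 6, colMod4 (v i) (v (nxt6 i)) =
      ((v (if decide (e i % 4 = 1) then i else nxt6 i) : ℕ)) := by
    intro i
    rw [hcol i, if_neg (hodd i)]
    by_cases h : e i % 4 = 1
    · rw [if_pos h, if_pos (by simpa using h)]
    · rw [if_neg h, if_neg (by simpa using h)]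
  have hginj : Function.Injective (fun i : Fin 6 => if decide (e i % 4 = 1) then i else nxt6 i) := by
    intro i j hij
    apply hcinj
    rw [hcolv i, hcolv j]
    simp only at hij
    rw [hij]
  -- Step D: all residues equal, contradicting the telescoping sum
  have hsum : e 0 + e 1 + e 2 + e 3 + e 4 + e 5 = 0 := by
    have h0 : nxt6 0 = 1 := rfl
    have h1 : nxt6 1 = 2 := rfl
    have h2 : nxt6 2 = 3 := rfl
    have h3 : nxt6 3 = 4 := rfl
    have h4 : nxt6 4 = 5 := rfl
    have h5 : nxt6 5 = 0 := rfl
    simp only [he, h0, h1, h2, h3, h4, h5]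
    ring
  rcases key2 _ hginj with h | h
  · have h1 := fun i => of_decide_eq_true (h i)
    have e0 := h1 0; have e1 := h1 1; have e2 := h1 2
    have e3 := h1 3; have e4 := h1 4; have e5 := h1 5
    omega
  · have h1 : ∀ i, ¬ (e i % 4 = 1) := fun i => of_decide_eq_false (h i)
    have e0 := h1 0; have e1 := h1 1; have e2 := h1 2
    have e3 := h1 3; have e4 := h1 4; have e5 := h1 5
    have o0 := hodd 0; have o1 := hodd 1; have o2 := hodd 2
    have o3 := hodd 3; have o4 := hodd 4; have o5 := hodd 5
    omega
end

section
/- Define an edge-coloring col' of the complete graph on the positive integers with colors in the nonnegative integers by, for distinct x, y: col'(x,y) = 0 if y − x ≡ 0 (mod 2), col'(x,y) = x if y − x ≡ 1 (mod 4), and col'(x,y) = y if y − x ≡ −1 (mod 4). Then for every integer k ≥ 3 with k ≢ 2 (mod 4), the cycle (1, 2, 3, …, k) is a rainbow k-cycle for col'. -/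
lemma colMod4_mk (a b : ℕ) (ha : 0 < a) (hb : 0 < b) :
    colMod4 ⟨a, ha⟩ ⟨b, hb⟩ =
    if ((b : ℤ) - (a : ℤ)) % 2 = 0 then 0
    else if ((b : ℤ) - (a : ℤ)) % 4 = 1 then a else b := rfl

lemma colMod4_val (k : ℕ) (hk : 3 ≤ k) (hk2 : k % 4 ≠ 2) (i : Fin k) :
    colMod4 (⟨i.val + 1, Nat.succ_pos _⟩ : ℕ+)
      (⟨(i.val + 1) % k + 1, Nat.succ_pos _⟩ : ℕ+) =
    if i.val + 1 < k then i.val + 1 else (if k % 4 = 0 then k else 0) := by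
  by_cases h : i.val + 1 < k
  · rw [Nat.mod_eq_of_lt h, colMod4_mk]
    have h1 : ((i.val + 1 + 1 : ℕ) : ℤ) - ((i.val + 1 : ℕ) : ℤ) = 1 := by push_cast; ring
    rw [h1]
    norm_num [h]
  · have hi : i.val + 1 = k := by have := i.isLt; omega
    have h0 : (i.val + 1) % k = 0 := by rw [hi, Nat.mod_self]
    rw [h0, colMod4_mk]
    have hik : ((i.val + 1 : ℕ) : ℤ) = (k : ℤ) := by omega
    have hk2' : (k : ℤ) % 4 ≠ 2 := by omega
    have hk0 : ((0 + 1 : ℕ) : ℤ) = 1 := by norm_num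
    rw [hk0, hik]
    have hcast : k % 4 = 0 ↔ (k:ℤ) % 4 = 0 := by omega
    split_ifs with h1 h2 h3 h4 <;> omega

/-- For every `k ≥ 3` with `k ≢ 2 (mod 4)`, the cycle `(1, 2, …, k)` is a rainbow
`k`-cycle for `colMod4`. -/
theorem colMod4_rainbow : ∀ k : ℕ, 3 ≤ k → k % 4 ≠ 2 →
    IsRainbowCycle colMod4
      (fun i : Fin k => (⟨i.val + 1, Nat.succ_pos _⟩ : ℕ+)) := by
  intro k hk hk2
  constructor
  · intro a b hab
    apply Fin.ext
    have := congrArg (fun x : ℕ+ => (x : ℕ)) hab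
    simpa using this
  · intro a b hab
    simp only [colMod4_val k hk hk2] at hab
    have ha := a.isLt
    have hb := b.isLt
    apply Fin.ext
    split_ifs at hab <;> omega
end

section
/- If an edge-coloring of a complete graph contains no rainbow 5-cycle, then it contains no rainbow 10-cycle. -/
/-- If `![x0,x1,x2,x3,x4]` is not injective, two of the entries coincide. -/
lemma five_rep {α : Type*} {x0 x1 x2 x3 x4 : α}
    (h : ¬ Function.Injective ![x0, x1, x2, x3, x4]) :
    x0 = x1 ∨ x0 = x2 ∨ x0 = x3 ∨ x0 = x4 ∨ x1 = x2 ∨ x1 = x3 ∨ x1 = x4 ∨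
      x2 = x3 ∨ x2 = x4 ∨ x3 = x4 := by
  by_contra hC
  push_neg at hC
  obtain ⟨h1, h2, h3, h4, h5, h6, h7, h8, h9, h10⟩ := hC
  apply h
  intro a b hab
  fin_cases a <;> fin_cases b <;> simp_all

set_option maxHeartbeats 4000000 in
/-- The finite core of the argument, checked by `decide`. -/
lemma final_check (b0 b2 b4 b6 b8 : Fin 10)
    (m0 : b0 = 0 ∨ b0 = 1 ∨ b0 = 2 ∨ b0 = 3)
    (m2 : b2 = 2 ∨ b2 = 3 ∨ b2 = 4 ∨ b2 = 5)
    (m4 : b4 = 4 ∨ b4 = 5 ∨ b4 = 6 ∨ b4 = 7)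
    (m6 : b6 = 6 ∨ b6 = 7 ∨ b6 = 8 ∨ b6 = 9)
    (m8 : b8 = 8 ∨ b8 = 9 ∨ b8 = 0 ∨ b8 = 1)
    (p : ¬ Function.Injective (![b0, b4, b8, b2, b6] : Fin 5 → Fin 10))
    (q0 : ¬ Function.Injective (![b0, b4, b8, 1, 0] : Fin 5 → Fin 10))
    (q1 : ¬ Function.Injective (![b2, b6, b0, 3, 2] : Fin 5 → Fin 10))
    (q2 : ¬ Function.Injective (![b4, b8, b2, 5, 4] : Fin 5 → Fin 10))
    (q3 : ¬ Function.Injective (![b6, b0, b4, 7, 6] : Fin 5 → Fin 10))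
    (q4 : ¬ Function.Injective (![b8, b2, b6, 9, 8] : Fin 5 → Fin 10)) : False := by
  rcases m0 with rfl | rfl | rfl | rfl <;>
  rcases m2 with rfl | rfl | rfl | rfl <;>
  rcases m4 with rfl | rfl | rfl | rfl <;>
  rcases m6 with rfl | rfl | rfl | rfl <;>
  rcases m8 with rfl | rfl | rfl | rfl <;>
  revert p q0 q1 q2 q3 q4 <;> decide

set_option maxHeartbeats 4000000 in
/-- If a symmetric edge-coloring contains no rainbow `5`-cycle then it contains no
rainbow `10`-cycle. -/
theorem no_rainbow_five_imp_no_ten {V C : Type*} (col : V → V → C)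
    (hsym : ∀ x y, col x y = col y x)
    (h : ¬ ContainsRainbowCycle col 5) : ¬ ContainsRainbowCycle col 10 := by
  rintro ⟨v, hv, hcol⟩
  -- colors of the cycle edges and of the distance-4 chords
  let c : Fin 10 → C := fun i => col (v i) (v ⟨(i.val + 1) % 10, Nat.mod_lt _ i.pos⟩)
  let d : Fin 10 → C := fun i => col (v i) (v ⟨(i.val + 4) % 10, by omega⟩)
  have hcinj : Function.Injective c := hcol
  -- no 5 distinct vertices give 5 pairwise distinct edge colors
  have master : ∀ t : Fin 5 → Fin 10, Function.Injective t →
      ¬ Function.Injective (fun k : Fin 5 =>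
        col (v (t k)) (v (t ⟨(k.val + 1) % 5, by omega⟩))) := by
    intro t ht hinj
    exact h ⟨fun k => v (t k), hv.comp ht, hinj⟩
  have master5 : ∀ (p q r s u : Fin 10) (X : Fin 5 → C),
      Function.Injective (![p, q, r, s, u] : Fin 5 → Fin 10) →
      X 0 = col (v p) (v q) → X 1 = col (v q) (v r) → X 2 = col (v r) (v s) →
      X 3 = col (v s) (v u) → X 4 = col (v u) (v p) →
      ¬ Function.Injective X := by
    intro p q r s u X hinj e0 e1 e2 e3 e4 hX
    have hpt : ∀ m : Fin 5, X m =
        col (v ((![p, q, r, s, u] : Fin 5 → Fin 10) m))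
          (v ((![p, q, r, s, u] : Fin 5 → Fin 10) ⟨(m.val + 1) % 5, by omega⟩)) := by
      intro m; fin_cases m
      exacts [e0, e1, e2, e3, e4]
    exact master ![p, q, r, s, u] hinj fun k l hkl =>
      hX ((hpt k).trans (hkl.trans (hpt l).symm))
  -- base cycles: each even chord color is one of the four nearby cycle colors
  have B0 : ¬ Function.Injective ![c 0, c 1, c 2, c 3, d 0] :=
    master5 0 1 2 3 4 _ (by decide) rfl rfl rfl rfl (hsym _ _)
  have B2 : ¬ Function.Injective ![c 2, c 3, c 4, c 5, d 2] :=
    master5 2 3 4 5 6 _ (by decide) rfl rfl rfl rfl (hsym _ _)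
  have B4 : ¬ Function.Injective ![c 4, c 5, c 6, c 7, d 4] :=
    master5 4 5 6 7 8 _ (by decide) rfl rfl rfl rfl (hsym _ _)
  have B6 : ¬ Function.Injective ![c 6, c 7, c 8, c 9, d 6] :=
    master5 6 7 8 9 0 _ (by decide) rfl rfl rfl rfl (hsym _ _)
  have B8 : ¬ Function.Injective ![c 8, c 9, c 0, c 1, d 8] :=
    master5 8 9 0 1 2 _ (by decide) rfl rfl rfl rfl (hsym _ _)
  -- extract the index of each even chord color
  obtain ⟨b0, m0, hb0⟩ : ∃ b : Fin 10, (b = 0 ∨ b = 1 ∨ b = 2 ∨ b = 3) ∧ d 0 = c b := by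
    rcases five_rep B0 with hh | hh | hh | hh | hh | hh | hh | hh | hh | hh
    · exact absurd (hcinj hh) (by decide)
    · exact absurd (hcinj hh) (by decide)
    · exact absurd (hcinj hh) (by decide)
    · exact ⟨0, Or.inl rfl, hh.symm⟩
    · exact absurd (hcinj hh) (by decide)
    · exact absurd (hcinj hh) (by decide)
    · exact ⟨1, Or.inr (Or.inl rfl), hh.symm⟩
    · exact absurd (hcinj hh) (by decide)
    · exact ⟨2, Or.inr (Or.inr (Or.inl rfl)), hh.symm⟩
    · exact ⟨3, Or.inr (Or.inr (Or.inr rfl)), hh.symm⟩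
  obtain ⟨b2, m2, hb2⟩ : ∃ b : Fin 10, (b = 2 ∨ b = 3 ∨ b = 4 ∨ b = 5) ∧ d 2 = c b := by
    rcases five_rep B2 with hh | hh | hh | hh | hh | hh | hh | hh | hh | hh
    · exact absurd (hcinj hh) (by decide)
    · exact absurd (hcinj hh) (by decide)
    · exact absurd (hcinj hh) (by decide)
    · exact ⟨2, Or.inl rfl, hh.symm⟩
    · exact absurd (hcinj hh) (by decide)
    · exact absurd (hcinj hh) (by decide)
    · exact ⟨3, Or.inr (Or.inl rfl), hh.symm⟩
    · exact absurd (hcinj hh) (by decide)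
    · exact ⟨4, Or.inr (Or.inr (Or.inl rfl)), hh.symm⟩
    · exact ⟨5, Or.inr (Or.inr (Or.inr rfl)), hh.symm⟩
  obtain ⟨b4, m4, hb4⟩ : ∃ b : Fin 10, (b = 4 ∨ b = 5 ∨ b = 6 ∨ b = 7) ∧ d 4 = c b := by
    rcases five_rep B4 with hh | hh | hh | hh | hh | hh | hh | hh | hh | hh
    · exact absurd (hcinj hh) (by decide)
    · exact absurd (hcinj hh) (by decide)
    · exact absurd (hcinj hh) (by decide)
    · exact ⟨4, Or.inl rfl, hh.symm⟩
    · exact absurd (hcinj hh) (by decide)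
    · exact absurd (hcinj hh) (by decide)
    · exact ⟨5, Or.inr (Or.inl rfl), hh.symm⟩
    · exact absurd (hcinj hh) (by decide)
    · exact ⟨6, Or.inr (Or.inr (Or.inl rfl)), hh.symm⟩
    · exact ⟨7, Or.inr (Or.inr (Or.inr rfl)), hh.symm⟩
  obtain ⟨b6, m6, hb6⟩ : ∃ b : Fin 10, (b = 6 ∨ b = 7 ∨ b = 8 ∨ b = 9) ∧ d 6 = c b := by
    rcases five_rep B6 with hh | hh | hh | hh | hh | hh | hh | hh | hh | hh
    · exact absurd (hcinj hh) (by decide)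
    · exact absurd (hcinj hh) (by decide)
    · exact absurd (hcinj hh) (by decide)
    · exact ⟨6, Or.inl rfl, hh.symm⟩
    · exact absurd (hcinj hh) (by decide)
    · exact absurd (hcinj hh) (by decide)
    · exact ⟨7, Or.inr (Or.inl rfl), hh.symm⟩
    · exact absurd (hcinj hh) (by decide)
    · exact ⟨8, Or.inr (Or.inr (Or.inl rfl)), hh.symm⟩
    · exact ⟨9, Or.inr (Or.inr (Or.inr rfl)), hh.symm⟩
  obtain ⟨b8, m8, hb8⟩ : ∃ b : Fin 10, (b = 8 ∨ b = 9 ∨ b = 0 ∨ b = 1) ∧ d 8 = c b := by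
    rcases five_rep B8 with hh | hh | hh | hh | hh | hh | hh | hh | hh | hh
    · exact absurd (hcinj hh) (by decide)
    · exact absurd (hcinj hh) (by decide)
    · exact absurd (hcinj hh) (by decide)
    · exact ⟨8, Or.inl rfl, hh.symm⟩
    · exact absurd (hcinj hh) (by decide)
    · exact absurd (hcinj hh) (by decide)
    · exact ⟨9, Or.inr (Or.inl rfl), hh.symm⟩
    · exact absurd (hcinj hh) (by decide)
    · exact ⟨0, Or.inr (Or.inr (Or.inl rfl)), hh.symm⟩
    · exact ⟨1, Or.inr (Or.inr (Or.inr rfl)), hh.symm⟩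
  -- the six extra 5-cycles, at the color level
  have P : ¬ Function.Injective ![d 0, d 4, d 8, d 2, d 6] :=
    master5 0 4 8 2 6 _ (by decide) rfl rfl rfl rfl rfl
  have Q0 : ¬ Function.Injective ![d 0, d 4, d 8, c 1, c 0] :=
    master5 0 4 8 2 1 _ (by decide) rfl rfl rfl (hsym _ _) (hsym _ _)
  have Q1 : ¬ Function.Injective ![d 2, d 6, d 0, c 3, c 2] :=
    master5 2 6 0 4 3 _ (by decide) rfl rfl rfl (hsym _ _) (hsym _ _)
  have Q2 : ¬ Function.Injective ![d 4, d 8, d 2, c 5, c 4] :=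
    master5 4 8 2 6 5 _ (by decide) rfl rfl rfl (hsym _ _) (hsym _ _)
  have Q3 : ¬ Function.Injective ![d 6, d 0, d 4, c 7, c 6] :=
    master5 6 0 4 8 7 _ (by decide) rfl rfl rfl (hsym _ _) (hsym _ _)
  have Q4 : ¬ Function.Injective ![d 8, d 2, d 6, c 9, c 8] :=
    master5 8 2 6 0 9 _ (by decide) rfl rfl rfl (hsym _ _) (hsym _ _)
  -- transfer to the index level
  have conv : ∀ (X : Fin 5 → C) (g : Fin 5 → Fin 10), (∀ k, X k = c (g k)) →
      ¬ Function.Injective X → ¬ Function.Injective g := by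
    intro X g hpt hX hg
    apply hX
    intro k l hkl
    apply hg
    apply hcinj
    rw [← hpt k, ← hpt l]; exact hkl
  exact final_check b0 b2 b4 b6 b8 m0 m2 m4 m6 m8
    (conv _ ![b0, b4, b8, b2, b6] (by intro k; fin_cases k; exacts [hb0, hb4, hb8, hb2, hb6]) P)
    (conv _ ![b0, b4, b8, 1, 0] (by intro k; fin_cases k; exacts [hb0, hb4, hb8, rfl, rfl]) Q0)
    (conv _ ![b2, b6, b0, 3, 2] (by intro k; fin_cases k; exacts [hb2, hb6, hb0, rfl, rfl]) Q1)
    (conv _ ![b4, b8, b2, 5, 4] (by intro k; fin_cases k; exacts [hb4, hb8, hb2, rfl, rfl]) Q2)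
    (conv _ ![b6, b0, b4, 7, 6] (by intro k; fin_cases k; exacts [hb6, hb0, hb4, rfl, rfl]) Q3)
    (conv _ ![b8, b2, b6, 9, 8] (by intro k; fin_cases k; exacts [hb8, hb2, hb6, rfl, rfl]) Q4)
end

section
/- For every edge-coloring of a complete graph, the set S = { n − 2 : n ≥ 3 and the coloring contains no rainbow n-cycle } ∪ {0} is closed under addition, i.e. the set of integers s ≥ 1 such that the coloring contains no rainbow (s+2)-cycle, together with 0, forms a submonoid of ℕ under addition. -/
/-!
Cut a rainbow `(s + t + 2)`-cycle `v₀ v₁ … v_{s+t+1}` along the chord `v₀ v_{s+1}`. The two arcs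
together with the chord form an `(s + 2)`-cycle and a `(t + 2)`-cycle, and since the arcs carry
pairwise distinct colors, the color of the chord occurs on at most one of them. So at least one of
the two shorter cycles is rainbow.
-/

open Function

namespace IsRainbowCycle

variable {V C : Type*} {col : V → V → C} {n : ℕ} [NeZero n] {v : Fin n → V}

theorem iff_add_one :
    IsRainbowCycle col v ↔ Injective v ∧ Injective (fun i => col (v i) (v (i + 1))) := by
  have h (i : Fin n) : (⟨(i.val + 1) % n, Nat.mod_lt _ i.pos⟩ : Fin n) = i + 1 := by
    ext; simp [Fin.val_add]
  simp only [IsRainbowCycle, h]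

theorem comp_add_right (hv : IsRainbowCycle col v) (k : Fin n) :
    IsRainbowCycle col (fun i => v (i + k)) := by
  rw [iff_add_one] at hv ⊢
  refine ⟨hv.1.comp (add_left_injective k), ?_⟩
  simpa only [comp_def, add_right_comm _ (1 : Fin n) k] using hv.2.comp (add_left_injective k)

theorem containsRainbowCycle_of_chord (hv : IsRainbowCycle col v) {m : ℕ} (hm : m + 2 ≤ n)
    (hchord : ∀ j : Fin (m + 1),
      col (v (Fin.castLE (by omega) j)) (v (Fin.castLE (by omega) j + 1)) ≠
        col (v (Fin.castLE hm (Fin.last (m + 1)))) (v 0)) :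
    ContainsRainbowCycle col (m + 2) := by
  rw [iff_add_one] at hv
  refine ⟨fun i => v (Fin.castLE hm i), iff_add_one.2 ⟨hv.1.comp (Fin.castLE_injective hm), ?_⟩⟩
  have hedge : (fun i : Fin (m + 2) => col (v (Fin.castLE hm i)) (v (Fin.castLE hm (i + 1)))) =
      Fin.snoc
        (fun j : Fin (m + 1) => col (v (Fin.castLE (by omega) j)) (v (Fin.castLE (by omega) j + 1)))
        (col (v (Fin.castLE hm (Fin.last (m + 1)))) (v 0)) := by
    funext i
    induction i using Fin.lastCases with
    | last =>
      have h0 : Fin.castLE hm 0 = 0 := by ext; simp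
      simp [Fin.last_add_one, h0]
    | cast j =>
      have h1 : Fin.castLE hm (j.castSucc + 1) = Fin.castLE (by omega) j + 1 := by
        ext; simp [Fin.val_add, Nat.mod_eq_of_lt (show j.val + 1 < n by omega)]
      simp only [Fin.snoc_castSucc, h1]
      rfl
  rw [hedge, Fin.snoc_injective_iff]
  refine ⟨hv.2.comp (Fin.castLE_injective _), ?_⟩
  rintro ⟨j, hj⟩
  exact hchord j hj

end IsRainbowCycle

theorem not_containsRainbowCycle_add {V C : Type*} {col : V → V → C}
    (hsym : ∀ x y, col x y = col y x) {s t : ℕ}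
    (hs : ¬ ContainsRainbowCycle col (s + 2)) (ht : ¬ ContainsRainbowCycle col (t + 2)) :
    ¬ ContainsRainbowCycle col (s + t + 2) := by
  rintro ⟨v, hv⟩
  by_cases hleft : ∀ j : Fin (s + 1),
      col (v (Fin.castLE (by omega) j)) (v (Fin.castLE (by omega) j + 1)) ≠
        col (v (Fin.castLE (by omega) (Fin.last (s + 1)))) (v 0)
  · exact hs (hv.containsRainbowCycle_of_chord (by omega) hleft)
  push Not at hleft
  obtain ⟨i, hi⟩ := hleft
  set k : Fin (s + t + 2) := ⟨s + 1, by omega⟩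
  rw [show Fin.castLE _ (Fin.last (s + 1)) = k from rfl] at hi
  -- The right arc is the left arc of the cycle rotated to start at `v k`.
  refine ht ((hv.comp_add_right k).containsRainbowCycle_of_chord (by omega) fun j hj => ?_)
  have hlast : Fin.castLE (by omega) (Fin.last (t + 1)) + k = 0 := by
    ext; simp [Fin.val_add, k, show t + 1 + (s + 1) = s + t + 2 by omega]
  rw [hlast, zero_add, add_right_comm _ 1 k, hsym (v 0), ← hi] at hj
  have hidx := congrArg Fin.val ((IsRainbowCycle.iff_add_one.1 hv).2 hj)
  simp only [Fin.val_add, Fin.val_castLE, k] at hidx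
  rw [Nat.mod_eq_of_lt (by omega)] at hidx
  omega

/-- For any symmetric edge-coloring, the set
`{ n - 2 : n ≥ 3, no rainbow n-cycle } ∪ {0}` — i.e. the `s ≥ 1` with no rainbow
`(s+2)`-cycle, together with `0` — is closed under addition (a submonoid of `ℕ`). -/
theorem spectrum_addClosed {V C : Type*} (col : V → V → C)
    (hsym : ∀ x y, col x y = col y x) :
    ∀ s t : ℕ,
      s ∈ ({0} ∪ {s : ℕ | 1 ≤ s ∧ ¬ ContainsRainbowCycle col (s + 2)} : Set ℕ) →
      t ∈ ({0} ∪ {s : ℕ | 1 ≤ s ∧ ¬ ContainsRainbowCycle col (s + 2)} : Set ℕ) →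
      s + t ∈ ({0} ∪ {s : ℕ | 1 ≤ s ∧ ¬ ContainsRainbowCycle col (s + 2)} : Set ℕ) := by
  rintro s t (rfl | ⟨hs, hs'⟩) ht
  · simpa using ht
  rcases ht with rfl | ⟨ht, ht'⟩
  · exact Or.inr ⟨hs, hs'⟩
  exact Or.inr ⟨by omega, not_containsRainbowCycle_add hsym hs' ht'⟩
end
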